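/- arXiv:2306.02462 — 7 statements merged into one kernel-verified Lean document; each statement's English description precedes it below -/
import Mathlib

section
/- Suppose that for every integer d ≥ 3 the set 𝓔_d is a finite subset of ℤ_{>0} × ℤ_{>0}, that 𝓔_d = ∅ for every odd d, that every 𝓔_d satisfies conditions (C1) and (C2), and that (1/d)·log(#𝓔_d + 1) → 0 as d → ∞. Then: (i) for every m ∈ ℤ∖{0,1} and every integer d ≥ 4, the set 𝓖_{≥d}(m) is finite; (ii) for every integer d ≥ 4 and every ε > 0 there exists a constant K (depending on d, ε and the family (𝓔_d)) such that #𝓖_{≥d}(m) ≤ K·|m|^{(1/d)+ε} for every integer m with |m| ≥ 2. -/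
/-- `q` is the `d`-th power of a rational number. -/
def IsDPow (d : ℕ) (q : ℚ) : Prop := ∃ r : ℚ, q = r ^ d

/-- Condition (C1): for all distinct pairs `(a,b) ≠ (a',b')` in `E`, at least one of the
ratios `a/a'` and `b/b'` is not the `d`-th power of a rational number. -/
def CondC1 (d : ℕ) (E : Finset (ℤ × ℤ)) : Prop :=
  ∀ p ∈ E, ∀ p' ∈ E, p ≠ p' →
    ¬ IsDPow d ((p.1 : ℚ) / (p'.1 : ℚ)) ∨ ¬ IsDPow d ((p.2 : ℚ) / (p'.2 : ℚ))

/-- Condition (C2): for all distinct pairs `(a,b) ≠ (a',b')` in `E`, at least one of the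
ratios `a/b'` and `b/a'` is not the `d`-th power of a rational number. -/
def CondC2 (d : ℕ) (E : Finset (ℤ × ℤ)) : Prop :=
  ∀ p ∈ E, ∀ p' ∈ E, p ≠ p' →
    ¬ IsDPow d ((p.1 : ℚ) / (p'.2 : ℚ)) ∨ ¬ IsDPow d ((p.2 : ℚ) / (p'.1 : ℚ))

/-- The set `𝓖_{≥ d}(m)` of quintuples `(d', a, b, x, y)` with `d' ≥ d`, `(a,b) ∈ 𝓔_{d'}`,
`max(|x|,|y|) ≥ 2` and `m = a x^{d'} + b y^{d'}`. -/
def GSet (E : ℕ → Finset (ℤ × ℤ)) (d : ℕ) (m : ℤ) : Set (ℕ × ℤ × ℤ × ℤ × ℤ) :=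
  {q | d ≤ q.1 ∧ (q.2.1, q.2.2.1) ∈ E q.1 ∧
    2 ≤ max |q.2.2.2.1| |q.2.2.2.2| ∧
    m = q.2.1 * q.2.2.2.1 ^ q.1 + q.2.2.1 * q.2.2.2.2 ^ q.1}

/-!
Because the exponent `n` is even and `a, b > 0`, a solution of `m = a x^n + b y^n` has
`|x|^n, |y|^n ≤ m`; hence `2^n ≤ m` and `|x| ≤ m^{1/d}`. A solution is determined by
`(n, a, b, x)` and the sign of `y`. So `n` takes `O(log m)` values, `(a, b) ∈ 𝓔_n` takes
`e^{o(n)} = m^{o(1)}` values and `x` takes `O(m^{1/d})` values.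
-/

open Finset Filter Topology

lemma abs_pow_le_of_eq_add_pow {n : ℕ} (hn : Even n) {a b x y m : ℤ} (ha : 0 < a) (hb : 0 ≤ b)
    (hm : m = a * x ^ n + b * y ^ n) : |x| ^ n ≤ m := by
  have hx := hn.pow_nonneg x
  have hy := hn.pow_nonneg y
  rw [hn.pow_abs, hm]
  nlinarith

lemma eq_of_pow_eq_of_nonneg_iff {R : Type*} [Ring R] [LinearOrder R] [IsStrictOrderedRing R]
    {n : ℕ} (hn : n ≠ 0) {y y' : R} (h : y ^ n = y' ^ n) (hsign : 0 ≤ y ↔ 0 ≤ y') : y = y' := by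
  rcases (pow_eq_pow_iff_of_ne_zero hn).mp h with h | ⟨rfl, -⟩
  · exact h
  · have hy' : y' = 0 := by
      rcases le_total 0 y' with h' | h'
      · exact le_antisymm (neg_nonneg.mp (hsign.mpr h')) h'
      · exact le_antisymm h' (hsign.mp (neg_nonneg.mpr h'))
    simp [hy']

lemma exists_le_mul_exp_of_tendsto_log_div {f : ℕ → ℕ}
    (hf : Tendsto (fun n : ℕ => Real.log ((f n : ℝ) + 1) / n) atTop (𝓝 0)) {δ : ℝ} (hδ : 0 < δ) :
    ∃ C : ℝ, ∀ n, (f n : ℝ) ≤ C * Real.exp (δ * n) := by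
  obtain ⟨N, hN⟩ := eventually_atTop.mp (hf.eventually (gt_mem_nhds hδ))
  have hS : 0 ≤ ∑ k ∈ range (N + 1), (f k : ℝ) := sum_nonneg fun _ _ => Nat.cast_nonneg _
  refine ⟨∑ k ∈ range (N + 1), (f k : ℝ) + 1, fun n => ?_⟩
  have hexp : 1 ≤ Real.exp (δ * n) := Real.one_le_exp (by positivity)
  rcases le_or_gt n N with hn | hn
  · have : (f n : ℝ) ≤ ∑ k ∈ range (N + 1), (f k : ℝ) :=
      single_le_sum (fun _ _ => Nat.cast_nonneg _) (mem_range.mpr (by omega))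
    nlinarith
  · have hlt := hN n hn.le
    rw [div_lt_iff₀ (Nat.cast_pos.mpr (by omega)), Real.log_lt_iff_lt_exp (by positivity)] at hlt
    nlinarith

lemma exp_mul_log_le_rpow {b M δ : ℝ} {n : ℕ} (hb : 0 < b) (hbM : b ^ n ≤ M) (hδ : 0 ≤ δ) :
    Real.exp (δ * Real.log b * n) ≤ M ^ δ := by
  calc Real.exp (δ * Real.log b * n) = (b ^ n) ^ δ := by
        rw [Real.rpow_def_of_pos (by positivity), Real.log_pow]; ring_nf
    _ ≤ M ^ δ := Real.rpow_le_rpow (by positivity) hbM hδ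

lemma natCast_add_one_le_of_two_pow_le {L : ℕ} {M δ : ℝ} (hM : (2 : ℝ) ^ L ≤ M) (hδ : 0 < δ) :
    (L : ℝ) + 1 ≤ (1 + 1 / (δ * Real.log 2)) * M ^ δ := by
  have hM1 : 1 ≤ M := (one_le_pow₀ one_le_two).trans hM
  have hL : L * Real.log 2 ≤ M ^ δ / δ := by
    calc L * Real.log 2 = Real.log (2 ^ L) := by rw [Real.log_pow]
      _ ≤ Real.log M := Real.log_le_log (by positivity) hM
      _ ≤ M ^ δ / δ := Real.log_le_rpow_div (by positivity) hδ
  have h1 : 1 ≤ M ^ δ := Real.one_le_rpow hM1 hδ.le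
  have h2 : (L : ℝ) ≤ M ^ δ / (δ * Real.log 2) := by
    rw [le_div_iff₀ (by positivity)]
    linarith [(le_div_iff₀ hδ).mp hL]
  calc (L : ℝ) + 1 ≤ M ^ δ / (δ * Real.log 2) + M ^ δ := by linarith
    _ = _ := by ring

lemma le_floor_rpow_one_div {d : ℕ} (hd : d ≠ 0) {x : ℤ} {M : ℝ} (hx : 0 ≤ x)
    (h : (x : ℝ) ^ d ≤ M) : x ≤ ⌊M ^ (1 / d : ℝ)⌋ := by
  have hM : 0 ≤ M := (by positivity : (0 : ℝ) ≤ x ^ d).trans h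
  rw [Int.le_floor, one_div, Real.le_rpow_inv_iff_of_pos (by exact_mod_cast hx) hM
    (by positivity), Real.rpow_natCast]
  exact h

lemma card_Icc_neg_floor_le {r : ℝ} (hr : 1 ≤ r) : ((Icc (-⌊r⌋) ⌊r⌋).card : ℝ) ≤ 3 * r := by
  have h0 : 0 ≤ ⌊r⌋ := Int.floor_nonneg.mpr (by linarith)
  have hcard : ((Icc (-⌊r⌋) ⌊r⌋).card : ℤ) = 2 * ⌊r⌋ + 1 := by rw [Int.card_Icc]; omega
  have hcard' : ((Icc (-⌊r⌋) ⌊r⌋).card : ℝ) = 2 * ⌊r⌋ + 1 := by exact_mod_cast hcard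
  linarith [Int.floor_le r]

namespace GSet

variable {E : ℕ → Finset (ℤ × ℤ)} {d n : ℕ} {m a b x y : ℤ}

lemma pos_of_mem (hpos : ∀ d : ℕ, 3 ≤ d → ∀ p ∈ E d, 0 < p.1 ∧ 0 < p.2) (hd : 3 ≤ d)
    (hq : (n, a, b, x, y) ∈ GSet E d m) : 0 < a ∧ 0 < b :=
  hpos n (hd.trans hq.1) (a, b) hq.2.1

lemma even_of_mem (hodd : ∀ d : ℕ, Odd d → E d = ∅) (hq : (n, a, b, x, y) ∈ GSet E d m) :
    Even n := by
  by_contra h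
  have hab := hq.2.1
  rw [hodd n (Nat.not_even_iff_odd.mp h)] at hab
  exact notMem_empty _ hab

lemma abs_pow_le_of_mem (hpos : ∀ d : ℕ, 3 ≤ d → ∀ p ∈ E d, 0 < p.1 ∧ 0 < p.2)
    (hodd : ∀ d : ℕ, Odd d → E d = ∅) (hd : 3 ≤ d) (hq : (n, a, b, x, y) ∈ GSet E d m) :
    |x| ^ n ≤ m ∧ |y| ^ n ≤ m := by
  obtain ⟨ha, hb⟩ := pos_of_mem hpos hd hq
  have hn := even_of_mem hodd hq
  have hm : m = a * x ^ n + b * y ^ n := hq.2.2.2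
  exact ⟨abs_pow_le_of_eq_add_pow hn ha hb.le hm,
    abs_pow_le_of_eq_add_pow hn hb ha.le (hm.trans (add_comm _ _))⟩

lemma two_pow_le_of_mem (hpos : ∀ d : ℕ, 3 ≤ d → ∀ p ∈ E d, 0 < p.1 ∧ 0 < p.2)
    (hodd : ∀ d : ℕ, Odd d → E d = ∅) (hd : 3 ≤ d) (hq : (n, a, b, x, y) ∈ GSet E d m) :
    2 ^ n ≤ m := by
  obtain ⟨hx, hy⟩ := abs_pow_le_of_mem hpos hodd hd hq
  rcases le_max_iff.mp hq.2.2.1 with h | h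
  · exact (pow_le_pow_left₀ zero_le_two h n).trans hx
  · exact (pow_le_pow_left₀ zero_le_two h n).trans hy

lemma abs_pow_le_of_mem_of_le (hpos : ∀ d : ℕ, 3 ≤ d → ∀ p ∈ E d, 0 < p.1 ∧ 0 < p.2)
    (hodd : ∀ d : ℕ, Odd d → E d = ∅) (hd : 3 ≤ d) (hq : (n, a, b, x, y) ∈ GSet E d m)
    {k : ℕ} (hk : k ≠ 0) (hkn : k ≤ n) : |x| ^ k ≤ m := by
  rcases (abs_nonneg x).eq_or_lt with hx | hx
  · rw [← hx, zero_pow hk]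
    exact (pow_nonneg zero_le_two n).trans (two_pow_le_of_mem hpos hodd hd hq)
  · exact (pow_le_pow_right₀ hx hkn).trans (abs_pow_le_of_mem hpos hodd hd hq).1

/-- Forgets `|y|`, which is recovered from the rest through `b y^n = m - a x^n`. -/
def code (q : ℕ × ℤ × ℤ × ℤ × ℤ) : ℕ × (ℤ × ℤ) × ℤ × Bool :=
  (q.1, (q.2.1, q.2.2.1), q.2.2.2.1, decide (0 ≤ q.2.2.2.2))

lemma injOn_code (hpos : ∀ d : ℕ, 3 ≤ d → ∀ p ∈ E d, 0 < p.1 ∧ 0 < p.2) (hd : 3 ≤ d) :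
    Set.InjOn code (GSet E d m) := by
  rintro ⟨n, a, b, x, y⟩ hq ⟨n', a', b', x', y'⟩ hq' h
  simp only [code, Prod.mk.injEq, decide_eq_decide] at h
  obtain ⟨rfl, ⟨rfl, rfl⟩, rfl, hsign⟩ := h
  have hb := (pos_of_mem hpos hd hq).2
  have hy : y ^ n = y' ^ n := mul_left_cancel₀ hb.ne' (by linarith [hq.2.2.2, hq'.2.2.2])
  rw [eq_of_pow_eq_of_nonneg_iff (by have := hq.1; omega) hy hsign]

noncomputable def candidates (E : ℕ → Finset (ℤ × ℤ)) (L : ℕ) (X : ℤ) : Finset (ℕ × (ℤ × ℤ) × ℤ × Bool) :=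
  (range (L + 1)).biUnion fun n => {n} ×ˢ E n ×ˢ Icc (-X) X ×ˢ univ

lemma card_candidates_le (L : ℕ) (X : ℤ) :
    (candidates E L X).card ≤ ∑ n ∈ range (L + 1), (E n).card * ((Icc (-X) X).card * 2) :=
  card_biUnion_le.trans (sum_le_sum fun n _ => by simp [card_product])

lemma mapsTo_code (hpos : ∀ d : ℕ, 3 ≤ d → ∀ p ∈ E d, 0 < p.1 ∧ 0 < p.2)
    (hodd : ∀ d : ℕ, Odd d → E d = ∅) (hd : 3 ≤ d) {L : ℕ} {X : ℤ}
    (hL : ∀ n : ℕ, 2 ^ n ≤ m → n ≤ L) (hX : ∀ x : ℤ, |x| ^ d ≤ m → |x| ≤ X) :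
    Set.MapsTo code (GSet E d m) (candidates E L X) := by
  rintro ⟨n, a, b, x, y⟩ hq
  have hnL := hL n (two_pow_le_of_mem hpos hodd hd hq)
  have hxX := abs_le.mp (hX x (abs_pow_le_of_mem_of_le hpos hodd hd hq (by omega) hq.1))
  simp only [code, candidates, coe_biUnion, coe_range, Set.mem_Iio, Set.mem_iUnion, mem_coe,
    mem_product, mem_singleton, mem_Icc, mem_univ, and_true]
  exact ⟨n, by omega, rfl, hq.2.1, hxX⟩

lemma ncard_le_card_candidates (hpos : ∀ d : ℕ, 3 ≤ d → ∀ p ∈ E d, 0 < p.1 ∧ 0 < p.2)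
    (hodd : ∀ d : ℕ, Odd d → E d = ∅) (hd : 3 ≤ d) {L : ℕ} {X : ℤ}
    (hL : ∀ n : ℕ, 2 ^ n ≤ m → n ≤ L) (hX : ∀ x : ℤ, |x| ^ d ≤ m → |x| ≤ X) :
    (GSet E d m).ncard ≤ (candidates E L X).card :=
  (Set.ncard_le_ncard_of_injOn code (mapsTo_code hpos hodd hd hL hX) (injOn_code hpos hd)).trans
    (Set.ncard_coe_finset _).le

theorem finite (hpos : ∀ d : ℕ, 3 ≤ d → ∀ p ∈ E d, 0 < p.1 ∧ 0 < p.2)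
    (hodd : ∀ d : ℕ, Odd d → E d = ∅) (hd : 3 ≤ d) (m : ℤ) : (GSet E d m).Finite := by
  have hL (n : ℕ) (h : 2 ^ n ≤ m) : n ≤ m.toNat := by
    have : (n : ℤ) < 2 ^ n := by exact_mod_cast Nat.lt_two_pow_self
    omega
  have hX (x : ℤ) (h : |x| ^ d ≤ m) : |x| ≤ m := by
    rcases (abs_nonneg x).eq_or_lt with hx | hx
    · rw [← hx] at h ⊢
      exact (pow_nonneg le_rfl d).trans h
    · exact (le_self_pow₀ hx (by omega)).trans h
  exact Set.Finite.of_injOn (mapsTo_code hpos hodd hd hL hX) (injOn_code hpos hd)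
    (candidates E _ _).finite_toSet

theorem ncard_le_mul_rpow (hpos : ∀ d : ℕ, 3 ≤ d → ∀ p ∈ E d, 0 < p.1 ∧ 0 < p.2)
    (hodd : ∀ d : ℕ, Odd d → E d = ∅)
    (hlim : Tendsto (fun d : ℕ => Real.log ((E d).card + 1) / (d : ℝ)) atTop (𝓝 0))
    (hd : 3 ≤ d) {ε : ℝ} (hε : 0 < ε) :
    ∃ K : ℝ, ∀ m : ℤ, 2 ≤ |m| →
      ((GSet E d m).ncard : ℝ) ≤ K * (|m| : ℝ) ^ ((1 : ℝ) / d + ε) := by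
  have hδ : 0 < ε / 2 := by positivity
  obtain ⟨C, hC⟩ := exists_le_mul_exp_of_tendsto_log_div (f := fun n => (E n).card) hlim
    (mul_pos hδ (Real.log_pos one_lt_two))
  have hC0 : 0 ≤ C := by simpa using (Nat.cast_nonneg _).trans (hC 0)
  refine ⟨6 * C * (1 + 1 / (ε / 2 * Real.log 2)), fun m hm => ?_⟩
  set M : ℝ := |(m : ℝ)|
  set L := Nat.log 2 m.natAbs
  set R : ℝ := M ^ (1 / d : ℝ)
  have hMm : ((|m| : ℤ) : ℝ) = M := Int.cast_abs
  have hM : (2 : ℝ) ^ L ≤ M := by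
    have hm0 : m.natAbs ≠ 0 := by rintro h; simp [Int.natAbs_eq_zero.mp h] at hm
    have := Nat.pow_log_le_self 2 hm0
    rw [← hMm, ← Nat.cast_natAbs]
    exact_mod_cast this
  have hM0 : 0 < M := lt_of_lt_of_le (by positivity) hM
  have hR : 1 ≤ R := Real.one_le_rpow ((one_le_pow₀ one_le_two).trans hM) (by positivity)
  have hL (n : ℕ) (h : 2 ^ n ≤ m) : n ≤ L :=
    Nat.le_log_of_pow_le one_lt_two (by zify; exact h.trans (le_abs_self m))
  have hX (x : ℤ) (h : |x| ^ d ≤ m) : |x| ≤ ⌊R⌋ :=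
    le_floor_rpow_one_div (by omega) (abs_nonneg x)
      (by rw [← hMm]; exact_mod_cast h.trans (le_abs_self m))
  have hE (n : ℕ) (hn : n ∈ range (L + 1)) : ((E n).card : ℝ) ≤ C * M ^ (ε / 2) := by
    have h2n : (2 : ℝ) ^ n ≤ M :=
      (pow_le_pow_right₀ one_le_two (mem_range_succ_iff.mp hn)).trans hM
    exact (hC n).trans (mul_le_mul_of_nonneg_left (exp_mul_log_le_rpow two_pos h2n hδ.le) hC0)
  calc ((GSet E d m).ncard : ℝ) ≤ (candidates E L ⌊R⌋).card := by
        exact_mod_cast ncard_le_card_candidates hpos hodd hd hL hX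
    _ ≤ ∑ n ∈ range (L + 1), ((E n).card : ℝ) * ((Icc (-⌊R⌋) ⌊R⌋).card * 2) := by
        exact_mod_cast card_candidates_le L ⌊R⌋
    _ ≤ ∑ n ∈ range (L + 1), C * M ^ (ε / 2) * (3 * R * 2) :=
        sum_le_sum fun n hn => mul_le_mul (hE n hn) (by linarith [card_Icc_neg_floor_le hR])
          (by positivity) (by positivity)
    _ = ((L : ℝ) + 1) * (C * M ^ (ε / 2) * (6 * R)) := by
        rw [sum_const, card_range, nsmul_eq_mul]; push_cast; ring
    _ ≤ ((1 + 1 / (ε / 2 * Real.log 2)) * M ^ (ε / 2)) * (C * M ^ (ε / 2) * (6 * R)) :=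
        mul_le_mul_of_nonneg_right (natCast_add_one_le_of_two_pow_le hM hδ) (by positivity)
    _ = 6 * C * (1 + 1 / (ε / 2 * Real.log 2)) * (M ^ (ε / 2) * M ^ (ε / 2) * R) := by ring
    _ = 6 * C * (1 + 1 / (ε / 2 * Real.log 2)) * M ^ ((1 : ℝ) / d + ε) := by
        rw [← Real.rpow_add hM0, ← Real.rpow_add hM0]; ring_nf

end GSet

theorem positive_definite_case_finiteness_and_count_general
    (E : ℕ → Finset (ℤ × ℤ))
    (hpos : ∀ d : ℕ, 3 ≤ d → ∀ p ∈ E d, 0 < p.1 ∧ 0 < p.2)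
    (hodd : ∀ d : ℕ, Odd d → E d = ∅)
    (hlim : Filter.Tendsto (fun d : ℕ => Real.log ((E d).card + 1) / (d : ℝ))
      Filter.atTop (nhds 0)) :
    (∀ m : ℤ, m ≠ 0 → m ≠ 1 → ∀ d : ℕ, 4 ≤ d → (GSet E d m).Finite) ∧
    (∀ d : ℕ, 4 ≤ d → ∀ ε : ℝ, 0 < ε → ∃ K : ℝ, ∀ m : ℤ, 2 ≤ |m| →
      ((GSet E d m).ncard : ℝ) ≤ K * (|m| : ℝ) ^ ((1 : ℝ) / d + ε)) :=
  ⟨fun m _ _ _ hd => GSet.finite hpos hodd (by omega) m,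
    fun _ hd _ hε => GSet.ncard_le_mul_rpow hpos hodd hlim (by omega) hε⟩

/-- Theorem 1.1 (a) (positive definite case): under conditions (C1), (C2), positivity of the
coefficients, `𝓔_d = ∅` for odd `d` and `(1/d) log(#𝓔_d + 1) → 0`, the set `𝓖_{≥ d}(m)` is
finite for `m ∉ {0,1}` and `d ≥ 4`, and `#𝓖_{≥ d}(m) = O(|m|^{1/d + ε})`. -/
theorem positive_definite_case_finiteness_and_count
    (E : ℕ → Finset (ℤ × ℤ))
    (hpos : ∀ d : ℕ, 3 ≤ d → ∀ p ∈ E d, 0 < p.1 ∧ 0 < p.2)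
    (hodd : ∀ d : ℕ, Odd d → E d = ∅)
    (hC1 : ∀ d : ℕ, 3 ≤ d → CondC1 d (E d))
    (hC2 : ∀ d : ℕ, 3 ≤ d → CondC2 d (E d))
    (hlim : Filter.Tendsto (fun d : ℕ => Real.log ((E d).card + 1) / (d : ℝ))
      Filter.atTop (nhds 0)) :
    (∀ m : ℤ, m ≠ 0 → m ≠ 1 → ∀ d : ℕ, 4 ≤ d → (GSet E d m).Finite) ∧
    (∀ d : ℕ, 4 ≤ d → ∀ ε : ℝ, 0 < ε → ∃ K : ℝ, ∀ m : ℤ, 2 ≤ |m| →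
      ((GSet E d m).ncard : ℝ) ≤ K * (|m| : ℝ) ^ ((1 : ℝ) / d + ε)) :=
  positive_definite_case_finiteness_and_count_general E hpos hodd hlim
end

section
/- Let A ≥ 1 and A₁ ≥ 1 be integers, let d₁ ≥ d₀ ≥ 0 be integers, and let κ be a real number with 0 < κ < A. For each integer d ≥ 3 let 𝓕_d be a finite set of homogeneous polynomials of degree d in two variables with integer coefficients, and assume: (iii) #𝓕_d ≤ d^{A₁} for every d ≥ 3, and (v) for every d ≥ max(d₁, d₀+1), every F ∈ 𝓕_d and every (x,y) ∈ ℤ² with F(x,y) ≠ 0 and max(|x|,|y|) ≥ A, one has max(|x|,|y|) ≤ κ·|F(x,y)|^{1/(d−d₀)}. Then for every ε > 0 there exist positive integers N₀ and D such that for every integer N ≥ N₀, the number of integers m ∈ [−N, N] for which there exist an integer d ≥ D, a form F ∈ 𝓕_d and (x,y) ∈ ℤ² with max(|x|,|y|) ≥ A and F(x,y) = m, is at most N^ε. -/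
/-!
If `F(x, y) = m ≠ 0` with `deg F = d` and `max(|x|, |y|) ≥ A`, condition (v) gives
`A ≤ κ |m| ^ (1 / (d - d₀))`, so `(A / κ) ^ (d - d₀) ≤ |m| ≤ N`: only degrees
`d ≤ d₀ + log N / log (A / κ)` occur, and `(x, y)` lies in the box
`max(|x|, |y|) ≤ κ N ^ (1 / (D - d₀))`. By (iii) the values are therefore taken by
`O((log N) ^ (A₁ + 1))` forms on a box of `O(N ^ (2 / (D - d₀)))` points, and choosing `D` with
`2 / (D - d₀) < ε` makes this at most `N ^ ε` for large `N`.
-/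

open Finset Filter Real Asymptotics MvPolynomial

noncomputable def boxValues (F : ℕ → Finset (MvPolynomial (Fin 2) ℤ)) (D M B : ℕ) : Finset ℤ :=
  (Icc D M).biUnion fun d => (F d).biUnion fun f =>
    (Icc (-(B : ℤ)) B ×ˢ Icc (-(B : ℤ)) B).image fun p => eval ![p.1, p.2] f

lemma sum_Icc_le_succ_pow_succ {g : ℕ → ℕ} {D M k : ℕ} (hg : ∀ d ∈ Icc D M, g d ≤ d ^ k) :
    ∑ d ∈ Icc D M, g d ≤ (M + 1) ^ (k + 1) :=
  calc ∑ d ∈ Icc D M, g d ≤ ∑ _d ∈ Icc D M, (M + 1) ^ k :=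
        sum_le_sum fun d hd => (hg d hd).trans (Nat.pow_le_pow_left (by grind) k)
    _ ≤ (M + 1) * (M + 1) ^ k := by rw [sum_const, smul_eq_mul, Nat.card_Icc]; gcongr; omega
    _ = (M + 1) ^ (k + 1) := (pow_succ' _ _).symm

section boxValues

variable {F : ℕ → Finset (MvPolynomial (Fin 2) ℤ)} {D M B : ℕ} {m : ℤ}

lemma mem_boxValues : m ∈ boxValues F D M B ↔
    ∃ d ∈ Icc D M, ∃ f ∈ F d, ∃ x y : ℤ, |x| ≤ B ∧ |y| ≤ B ∧ eval ![x, y] f = m := by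
  simp [boxValues, abs_le, and_assoc]

lemma card_boxValues_le {k : ℕ} (hF : ∀ d ∈ Icc D M, #(F d) ≤ d ^ k) :
    #(boxValues F D M B) ≤ (M + 1) ^ (k + 1) * (2 * B + 1) ^ 2 := by
  have hbox : #(Icc (-(B : ℤ)) B ×ˢ Icc (-(B : ℤ)) B) = (2 * B + 1) ^ 2 := by
    rw [card_product, Int.card_Icc, ← sq]; congr 2; omega
  calc #(boxValues F D M B) ≤ ∑ d ∈ Icc D M, ∑ _f ∈ F d, (2 * B + 1) ^ 2 :=
        card_biUnion_le.trans <| sum_le_sum fun d _ => card_biUnion_le.trans <|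
          sum_le_sum fun _ _ => card_image_le.trans hbox.le
    _ = (∑ d ∈ Icc D M, #(F d)) * (2 * B + 1) ^ 2 := by simp only [sum_const, smul_eq_mul, sum_mul]
    _ ≤ (M + 1) ^ (k + 1) * (2 * B + 1) ^ 2 := by gcongr; exact sum_Icc_le_succ_pow_succ hF

end boxValues

lemma le_log_div_log_of_le_mul_rpow {a κ t r : ℝ} (hκ : 0 < κ) (hκa : κ < a) (ht : 0 < t)
    (hr : 0 < r) (h : a ≤ κ * t ^ (1 / r)) : r ≤ log t / log (a / κ) := by
  have hlog : log (a / κ) ≤ 1 / r * log t := by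
    rw [← log_rpow ht]
    exact log_le_log (div_pos (hκ.trans hκa) hκ) (by rw [div_le_iff₀ hκ]; linarith)
  rw [le_div_iff₀ (log_pos ((one_lt_div hκ).2 hκa))]
  calc r * log (a / κ) ≤ r * (1 / r * log t) := mul_le_mul_of_nonneg_left hlog hr.le
    _ = log t := by field_simp

lemma Int.abs_le_natFloor_of_abs_le {z : ℤ} {b : ℝ} (h : ((|z| : ℤ) : ℝ) ≤ b) :
    |z| ≤ (⌊b⌋₊ : ℤ) := by
  rw [Int.natCast_floor_eq_floor ((Int.cast_nonneg (abs_nonneg z)).trans h)]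
  exact Int.le_floor.2 h

lemma setOf_values_subset_boxValues {A d₀ d₁ : ℕ} {κ : ℝ} (hκpos : 0 < κ) (hκA : κ < (A : ℝ))
    {F : ℕ → Finset (MvPolynomial (Fin 2) ℤ)}
    (hv : ∀ d : ℕ, max d₁ (d₀ + 1) ≤ d → ∀ f ∈ F d, ∀ x y : ℤ,
      MvPolynomial.eval ![x, y] f ≠ 0 → (A : ℤ) ≤ max |x| |y| →
      ((max |x| |y| : ℤ) : ℝ) ≤
        κ * ((|MvPolynomial.eval ![x, y] f| : ℤ) : ℝ) ^ ((1 : ℝ) / ((d : ℝ) - (d₀ : ℝ))))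
    {D : ℕ} (hD : max d₁ (d₀ + 1) ≤ D) (N : ℕ) :
    {m : ℤ | |m| ≤ (N : ℤ) ∧ ∃ d : ℕ, D ≤ d ∧ ∃ f ∈ F d, ∃ x y : ℤ,
        (A : ℤ) ≤ max |x| |y| ∧ MvPolynomial.eval ![x, y] f = m} ⊆
      ↑(insert 0 (boxValues F D (d₀ + ⌊log N / log (A / κ)⌋₊)
        ⌊κ * (N : ℝ) ^ (1 / ((D : ℝ) - d₀))⌋₊)) := by
  rintro _ ⟨hmN, d, hDd, f, hf, x, y, hA, rfl⟩
  set m := eval ![x, y] f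
  rcases eq_or_ne m 0 with hm0 | hm0
  · simp [hm0]
  have hD₀ : (d₀ : ℝ) + 1 ≤ D := by exact_mod_cast (le_max_right _ _).trans hD
  have hDd' : (D : ℝ) ≤ d := by exact_mod_cast hDd
  have hm1 : (1 : ℝ) ≤ ((|m| : ℤ) : ℝ) := by exact_mod_cast Int.one_le_abs hm0
  have hmN' : ((|m| : ℤ) : ℝ) ≤ N := by exact_mod_cast hmN
  have hbound := hv d (hD.trans hDd) f hf x y hm0 hA
  have hdeg : d ≤ d₀ + ⌊log N / log (A / κ)⌋₊ := by
    have h := le_log_div_log_of_le_mul_rpow hκpos hκA (by linarith) (by linarith)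
      ((by exact_mod_cast hA : (A : ℝ) ≤ ((max |x| |y| : ℤ) : ℝ)).trans hbound)
    have h' : ((d - d₀ : ℕ) : ℝ) ≤ log N / log (A / κ) := by
      rw [Nat.cast_sub (by omega)]
      exact h.trans (div_le_div_of_nonneg_right (log_le_log (by linarith) hmN')
        (log_nonneg ((one_le_div hκpos).2 hκA.le)))
    have := Nat.le_floor h'
    omega
  have hbox : ((max |x| |y| : ℤ) : ℝ) ≤ κ * (N : ℝ) ^ (1 / ((D : ℝ) - d₀)) :=
    calc _ ≤ κ * ((|m| : ℤ) : ℝ) ^ (1 / ((d : ℝ) - d₀)) := hbound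
      _ ≤ κ * (N : ℝ) ^ (1 / ((d : ℝ) - d₀)) := by gcongr; exact div_nonneg one_pos.le (by linarith)
      _ ≤ κ * (N : ℝ) ^ (1 / ((D : ℝ) - d₀)) := by gcongr <;> linarith
  refine mem_insert_of_mem (mem_boxValues.2 ⟨d, mem_Icc.2 ⟨hDd, hdeg⟩, f, hf, x, y, ?_, ?_, rfl⟩)
  · exact Int.abs_le_natFloor_of_abs_le ((Int.cast_le.2 (le_max_left _ _)).trans hbox)
  · exact Int.abs_le_natFloor_of_abs_le ((Int.cast_le.2 (le_max_right _ _)).trans hbox)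

lemma natCast_one_add_pow_mul_sq_le (n k : ℕ) {b κ L t : ℝ} (hb : 0 < b) (hκ : 0 ≤ κ)
    (hL : 1 ≤ L) (ht : 1 ≤ t) :
    ((1 + (n + ⌊L / b⌋₊ + 1) ^ k * (2 * ⌊κ * t⌋₊ + 1) ^ 2 : ℕ) : ℝ) ≤
      1 + (n + 1 + 1 / b) ^ k * (2 * κ + 1) ^ 2 * L ^ k * t ^ 2 := by
  have hdeg : (n + ⌊L / b⌋₊ + 1 : ℝ) ≤ (n + 1 + 1 / b) * L := by
    have hfloor : (⌊L / b⌋₊ : ℝ) ≤ L / b := Nat.floor_le (by positivity)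
    have hn : (n + 1 : ℝ) ≤ (n + 1) * L := le_mul_of_one_le_right (by positivity) hL
    have hexpand : (n + 1 + 1 / b) * L = (n + 1) * L + L / b := by ring
    linarith
  have hbox : (2 * ⌊κ * t⌋₊ + 1 : ℝ) ≤ (2 * κ + 1) * t := by
    have hfloor : (⌊κ * t⌋₊ : ℝ) ≤ κ * t := Nat.floor_le (by positivity)
    linarith
  calc _ = 1 + (n + ⌊L / b⌋₊ + 1 : ℝ) ^ k * (2 * ⌊κ * t⌋₊ + 1 : ℝ) ^ 2 := by push_cast; ring
    _ ≤ 1 + ((n + 1 + 1 / b) * L) ^ k * ((2 * κ + 1) * t) ^ 2 := by gcongr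
    _ = _ := by rw [mul_pow, mul_pow]; ring

lemma exists_le_two_mul_one_div_sub_lt (n d₀ : ℕ) {ε : ℝ} (hε : 0 < ε) :
    ∃ D : ℕ, n ≤ D ∧ 0 < (D : ℝ) - d₀ ∧ 2 * (1 / ((D : ℝ) - d₀)) < ε := by
  obtain ⟨D', hD'⟩ := exists_nat_gt ((d₀ : ℝ) + 2 / ε)
  have hR : 2 / ε < ((max n D' : ℕ) : ℝ) - d₀ := by
    have : (D' : ℝ) ≤ (max n D' : ℕ) := by exact_mod_cast le_max_right _ _
    linarith
  have hRpos := (div_pos two_pos hε).trans hR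
  refine ⟨max n D', le_max_left _ _, hRpos, ?_⟩
  rw [← mul_div_assoc, mul_one]
  exact (div_lt_comm₀ hε hRpos).1 hR

lemma eventually_one_add_mul_log_pow_mul_rpow_le (C : ℝ) (k : ℕ) {θ ε : ℝ} (hε : 0 < ε)
    (hθε : θ < ε) : ∀ᶠ N : ℝ in atTop, 1 + C * log N ^ k * N ^ θ ≤ N ^ ε := by
  have hlog : (fun N : ℝ => C * log N ^ k * N ^ θ) =o[atTop] fun N => N ^ (ε - θ) * N ^ θ := by
    simpa [rpow_natCast] using ((isLittleO_log_rpow_rpow_atTop k (sub_pos.2 hθε)).const_mul_left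
      C).mul_isBigO (isBigO_refl (fun N : ℝ => N ^ θ) atTop)
  have hpow : (fun N : ℝ => N ^ (ε - θ) * N ^ θ) =ᶠ[atTop] fun N => N ^ ε :=
    (eventually_gt_atTop 0).mono fun N hN => by simp only [← rpow_add hN, sub_add_cancel]
  have hone : (fun _ : ℝ => (1 : ℝ)) =o[atTop] fun N => N ^ ε :=
    isLittleO_const_left.2 (Or.inr (tendsto_norm_atTop_atTop.comp (tendsto_rpow_atTop hε)))
  filter_upwards [(hone.add (hlog.trans_eventuallyEq hpow)).bound one_pos,
    eventually_ge_atTop 0] with N hN hN0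
  rw [one_mul, norm_of_nonneg (rpow_nonneg hN0 ε)] at hN
  exact (le_abs_self _).trans hN

theorem regular_family_counting_general
    (A A₁ : ℕ)
    (d₀ d₁ : ℕ)
    (κ : ℝ) (hκpos : 0 < κ) (hκA : κ < (A : ℝ))
    (F : ℕ → Finset (MvPolynomial (Fin 2) ℤ))
    (hcard : ∀ d : ℕ, 3 ≤ d → (F d).card ≤ d ^ A₁)
    (hv : ∀ d : ℕ, max d₁ (d₀ + 1) ≤ d → ∀ f ∈ F d, ∀ x y : ℤ,
      MvPolynomial.eval ![x, y] f ≠ 0 → (A : ℤ) ≤ max |x| |y| →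
      ((max |x| |y| : ℤ) : ℝ) ≤
        κ * ((|MvPolynomial.eval ![x, y] f| : ℤ) : ℝ) ^ ((1 : ℝ) / ((d : ℝ) - (d₀ : ℝ)))) :
    ∀ ε : ℝ, 0 < ε → ∃ N₀ D : ℕ, 0 < N₀ ∧ 0 < D ∧ ∀ N : ℕ, N₀ ≤ N →
      (({m : ℤ | |m| ≤ (N : ℤ) ∧ ∃ d : ℕ, D ≤ d ∧ ∃ f ∈ F d, ∃ x y : ℤ,
          (A : ℤ) ≤ max |x| |y| ∧ MvPolynomial.eval ![x, y] f = m}).ncard : ℝ)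
        ≤ (N : ℝ) ^ ε := by
  intro ε hε
  have hlogc : 0 < log (A / κ) := log_pos ((one_lt_div hκpos).2 hκA)
  obtain ⟨D, hD, hRpos, hθε⟩ := exists_le_two_mul_one_div_sub_lt (max (max d₁ (d₀ + 1)) 3) d₀ hε
  set θ : ℝ := 1 / ((D : ℝ) - d₀)
  set C := ((d₀ : ℝ) + 1 + 1 / log (A / κ)) ^ (A₁ + 1) * (2 * κ + 1) ^ 2
  obtain ⟨N₀, hN₀⟩ := eventually_atTop.1 <| tendsto_natCast_atTop_atTop.eventually <|
    (eventually_one_add_mul_log_pow_mul_rpow_le C (A₁ + 1) hε hθε).and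
      (tendsto_log_atTop.eventually_ge_atTop 1)
  refine ⟨max N₀ 1, D, by positivity, by omega, fun N hN => ?_⟩
  obtain ⟨hlim, hlogN⟩ := hN₀ N (le_of_max_le_left hN)
  have hN1 : (1 : ℝ) ≤ N := by exact_mod_cast le_of_max_le_right hN
  set M := d₀ + ⌊log N / log (A / κ)⌋₊
  set B := ⌊κ * (N : ℝ) ^ θ⌋₊
  calc _ ≤ ((1 + (M + 1) ^ (A₁ + 1) * (2 * B + 1) ^ 2 : ℕ) : ℝ) := by
        refine Nat.cast_le.2 <| (Set.ncard_le_ncard <| setOf_values_subset_boxValues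
          hκpos hκA hv ((le_max_left _ _).trans hD) N).trans ?_
        rw [Set.ncard_coe_finset, add_comm 1]
        exact (card_insert_le _ _).trans
          (by gcongr; exact card_boxValues_le fun d hd => hcard d (by grind))
    _ ≤ 1 + C * log N ^ (A₁ + 1) * (N ^ θ) ^ 2 :=
      natCast_one_add_pow_mul_sq_le d₀ _ hlogc hκpos.le hlogN (one_le_rpow hN1 (by positivity))
    _ = 1 + C * log N ^ (A₁ + 1) * N ^ (2 * θ) := by
      rw [mul_comm 2 θ, rpow_mul (by positivity), rpow_two]
    _ ≤ N ^ ε := hlim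

/-- Lemma 2.3: a family of binary forms satisfying conditions (iii) and (v) of the definition
of an `(A, A₁, d₀, d₁, κ)`-regular family satisfies the counting condition (ii) in the
definition of a regular family. -/
theorem regular_family_counting
    (A A₁ : ℕ) (hA : 1 ≤ A) (hA₁ : 1 ≤ A₁)
    (d₀ d₁ : ℕ) (hd₀d₁ : d₀ ≤ d₁)
    (κ : ℝ) (hκpos : 0 < κ) (hκA : κ < (A : ℝ))
    (F : ℕ → Finset (MvPolynomial (Fin 2) ℤ))
    (hhom : ∀ d : ℕ, 3 ≤ d → ∀ f ∈ F d, f.IsHomogeneous d)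
    (hcard : ∀ d : ℕ, 3 ≤ d → (F d).card ≤ d ^ A₁)
    (hv : ∀ d : ℕ, max d₁ (d₀ + 1) ≤ d → ∀ f ∈ F d, ∀ x y : ℤ,
      MvPolynomial.eval ![x, y] f ≠ 0 → (A : ℤ) ≤ max |x| |y| →
      ((max |x| |y| : ℤ) : ℝ) ≤
        κ * ((|MvPolynomial.eval ![x, y] f| : ℤ) : ℝ) ^ ((1 : ℝ) / ((d : ℝ) - (d₀ : ℝ)))) :
    ∀ ε : ℝ, 0 < ε → ∃ N₀ D : ℕ, 0 < N₀ ∧ 0 < D ∧ ∀ N : ℕ, N₀ ≤ N →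
      (({m : ℤ | |m| ≤ (N : ℤ) ∧ ∃ d : ℕ, D ≤ d ∧ ∃ f ∈ F d, ∃ x y : ℤ,
          (A : ℤ) ≤ max |x| |y| ∧ MvPolynomial.eval ![x, y] f = m}).ncard : ℝ)
        ≤ (N : ℝ) ^ ε :=
  regular_family_counting_general A A₁ d₀ d₁ κ hκpos hκA F hcard hv
end

section
/- Let θ > 0. Suppose there exists an integer d₀ ≥ 3 with the following property: for all integers m and d with |m| ≥ 2 and d ≥ d₀, whenever d' ≥ d, (a,b) ∈ 𝓔_{d'} and (x,y) ∈ ℤ² satisfy max(|x|,|y|) ≥ 2 and m = a·x^{d'} + b·y^{d'}, one has max(|x|,|y|)^{d'} ≤ |m|^θ. Suppose moreover that (1/d)·log(#𝓔_d + 1) → 0 as d → ∞. Then for every integer d ≥ d₀ and every ε > 0 there exists N₀ such that for every integer N ≥ N₀, #𝓡_{≥d}(N) ≤ N^{(2θ+ε)/d}. -/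
/-- `#𝓡_{≥ d}(N)`: the number of integers `m ∈ [-N, N]` with `𝓖_{≥ d}(m) ≠ ∅`. -/
noncomputable def RCount (E : ℕ → Finset (ℤ × ℤ)) (d N : ℕ) : ℕ :=
  Set.ncard {m : ℤ | |m| ≤ (N : ℤ) ∧ (GSet E d m).Nonempty}

set_option maxHeartbeats 1000000 in
/-- Lemma 2.4 (b): under the hypothesis `max(|x|,|y|)^{d'} ≤ |m|^θ` for representations of
degree `d' ≥ d ≥ d₀` and `(1/d) log(#𝓔_d + 1) → 0`, for every `d ≥ d₀` and every `ε > 0`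
one has `#𝓡_{≥ d}(N) ≤ N^{(2θ+ε)/d}` for all sufficiently large `N`. -/
theorem easy_lemma_part_b
    (E : ℕ → Finset (ℤ × ℤ)) (θ : ℝ) (hθ : 0 < θ) (d₀ : ℕ) (hd₀ : 3 ≤ d₀)
    (hyp : ∀ m : ℤ, 2 ≤ |m| → ∀ d : ℕ, d₀ ≤ d → ∀ d' : ℕ, d ≤ d' →
      ∀ a b x y : ℤ, (a, b) ∈ E d' → 2 ≤ max |x| |y| →
      m = a * x ^ d' + b * y ^ d' →
      ((max |x| |y| : ℤ) : ℝ) ^ d' ≤ (|m| : ℝ) ^ θ)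
    (hlim : Filter.Tendsto (fun d : ℕ => Real.log ((E d).card + 1) / (d : ℝ))
      Filter.atTop (nhds 0)) :
    ∀ d : ℕ, d₀ ≤ d → ∀ ε : ℝ, 0 < ε → ∃ N₀ : ℕ, ∀ N : ℕ, N₀ ≤ N →
      (RCount E d N : ℝ) ≤ (N : ℝ) ^ ((2 * θ + ε) / d) := by
  intro d hd ε hε
  classical
  have hd3 : 3 ≤ d := le_trans hd₀ hd
  have hdpos : (0:ℝ) < d := by exact_mod_cast Nat.lt_of_lt_of_le (by norm_num) hd3
  have hlog2 : 0 < Real.log 2 := Real.log_pos one_lt_two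
  obtain ⟨δ, hδdef⟩ : ∃ δ : ℝ, δ = ε * Real.log 2 / (4 * d * θ) := ⟨_, rfl⟩
  have hδ : 0 < δ := by rw [hδdef]; positivity
  have hδθ : δ * θ / Real.log 2 = ε / (4 * d) := by
    rw [hδdef]; field_simp
  -- threshold for the exponential bound on #E n
  obtain ⟨d₁, hd₁⟩ := Filter.eventually_atTop.mp (hlim.eventually_lt_const hδ)
  obtain ⟨C, hCdef⟩ : ∃ C : ℝ,
      C = 1 + ∑ n ∈ Finset.range (max d₁ 1), (((E n).card : ℝ) + 1) := ⟨_, rfl⟩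
  have hC1 : 1 ≤ C := by
    have : (0:ℝ) ≤ ∑ n ∈ Finset.range (max d₁ 1), (((E n).card : ℝ) + 1) :=
      Finset.sum_nonneg fun n _ => by positivity
    linarith [hCdef.ge, hCdef.le, this]
  have hC0 : 0 < C := lt_of_lt_of_le one_pos hC1
  have hCn : ∀ n : ℕ, ((E n).card : ℝ) + 1 ≤ C * Real.exp (δ * n) := by
    intro n
    have hexp1 : 1 ≤ Real.exp (δ * n) := Real.one_le_exp (by positivity)
    rcases lt_or_ge n (max d₁ 1) with hn | hn
    · have h1 : ((E n).card : ℝ) + 1 ≤ C := by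
        have := Finset.single_le_sum (s := Finset.range (max d₁ 1))
          (f := fun n => (((E n).card : ℝ) + 1))
          (fun i _ => by positivity) (Finset.mem_range.mpr hn)
        linarith [hCdef]
      have h2 : C * 1 ≤ C * Real.exp (δ * n) := mul_le_mul_of_nonneg_left hexp1 hC0.le
      linarith
    · have hn1 : d₁ ≤ n := le_trans (le_max_left _ _) hn
      have hnpos : (0:ℝ) < n := by
        have : 1 ≤ n := le_trans (le_max_right _ _) hn
        exact_mod_cast this
      have := hd₁ n hn1
      have hlt : Real.log (((E n).card : ℝ) + 1) < δ * n := by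
        rw [div_lt_iff₀ hnpos] at this
        linarith [this]
      have hpos : (0:ℝ) < ((E n).card : ℝ) + 1 := by positivity
      have hle : ((E n).card : ℝ) + 1 < Real.exp (δ * n) := by
        have := Real.exp_lt_exp.mpr hlt
        rwa [Real.exp_log hpos] at this
      have h2 : 1 * Real.exp (δ * n) ≤ C * Real.exp (δ * n) :=
        mul_le_mul_of_nonneg_right hC1 (Real.exp_nonneg _)
      linarith [hle.le]
  -- constants
  obtain ⟨γ, hγdef⟩ : ∃ γ : ℝ, γ = ε / (16 * d) := ⟨_, rfl⟩
  have hγ : 0 < γ := by rw [hγdef]; positivity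
  obtain ⟨c₁, hc₁def⟩ : ∃ c₁ : ℝ, c₁ = θ / (γ * Real.log 2) + 1 := ⟨_, rfl⟩
  have hc₁ : 0 < c₁ := by
    have : 0 < θ / (γ * Real.log 2) := div_pos hθ (mul_pos hγ hlog2)
    linarith [hc₁def.ge]
  obtain ⟨K, hKdef⟩ : ∃ K : ℝ, K = 3 + 9 * C * c₁ ^ 2 := ⟨_, rfl⟩
  have hK0 : 0 < K := by
    have h1 : (0:ℝ) ≤ 9 * C * c₁ ^ 2 :=
      mul_nonneg (mul_nonneg (by norm_num) hC0.le) (sq_nonneg c₁)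
    rw [hKdef]
    linarith
  -- eventual bound on the constant
  have hev : ∀ᶠ N : ℕ in Filter.atTop, K ≤ (N : ℝ) ^ (5 * ε / (8 * d)) := by
    have h1 : Filter.Tendsto (fun x : ℝ => x ^ (5 * ε / (8 * d))) Filter.atTop Filter.atTop :=
      tendsto_rpow_atTop (by positivity)
    exact (h1.comp tendsto_natCast_atTop_atTop).eventually_ge_atTop K
  obtain ⟨N₁, hN₁⟩ := Filter.eventually_atTop.mp hev
  refine ⟨max N₁ 2, fun N hN => ?_⟩
  have hN2 : 2 ≤ N := le_trans (le_max_right _ _) hN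
  have hKN : K ≤ (N : ℝ) ^ (5 * ε / (8 * d)) := hN₁ N (le_trans (le_max_left _ _) hN)
  have hN1 : (1:ℝ) ≤ (N:ℝ) := by exact_mod_cast Nat.one_le_of_lt hN2
  have hNpos : (0:ℝ) < (N:ℝ) := lt_of_lt_of_le one_pos hN1
  have hlogN : 0 ≤ Real.log N := Real.log_nonneg hN1
  obtain ⟨D, hDdef⟩ : ∃ D : ℕ, D = ⌊θ * Real.log N / Real.log 2⌋₊ := ⟨_, rfl⟩
  obtain ⟨X, hXdef⟩ : ∃ X : ℤ, X = ⌊(N:ℝ) ^ (θ / (d:ℝ))⌋ := ⟨_, rfl⟩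
  have hrpow1 : (1:ℝ) ≤ (N:ℝ) ^ (θ / (d:ℝ)) := Real.one_le_rpow hN1 (by positivity)
  have hX0 : 0 ≤ X := by
    rw [hXdef]
    exact Int.le_floor.mpr (by simpa using (le_trans zero_le_one hrpow1))
  have hXle : (X:ℝ) ≤ (N:ℝ) ^ (θ / (d:ℝ)) := by rw [hXdef]; exact Int.floor_le _
  obtain ⟨AllE, hAllEdef⟩ : ∃ A : Finset (ℤ × ℤ), A = (Finset.Icc d D).biUnion E := ⟨_, rfl⟩
  obtain ⟨Ix, hIxdef⟩ : ∃ I : Finset ℤ, I = Finset.Icc (-X) X := ⟨_, rfl⟩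
  obtain ⟨T, hTdef⟩ : ∃ T : Finset (ℕ × (ℤ × ℤ) × ℤ × ℤ),
    T = (Finset.Icc d D) ×ˢ AllE ×ˢ (Ix ×ˢ Ix) := ⟨_, rfl⟩
  set f : ℕ × (ℤ × ℤ) × ℤ × ℤ → ℤ :=
    fun q => q.2.1.1 * q.2.2.1 ^ q.1 + q.2.1.2 * q.2.2.2 ^ q.1 with hfdef
  -- the containment
  have hsub : {m : ℤ | |m| ≤ (N:ℤ) ∧ (GSet E d m).Nonempty} ⊆
      ({-1, 0, 1} : Set ℤ) ∪ ↑(T.image f) := by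
    rintro m ⟨hmN, ⟨⟨n, a, b, x, y⟩, hn, hab, hmax, hrep⟩⟩
    dsimp only at hn hab hmax hrep
    rcases le_or_gt (|m|) 1 with hm | hm
    · left
      have := abs_le.mp hm
      simp only [Set.mem_insert_iff, Set.mem_singleton_iff]
      omega
    · right
      have hm2 : (2:ℤ) ≤ |m| := hm
      have hkey := hyp m hm2 d hd n hn a b x y hab hmax hrep
      set M : ℝ := ((max |x| |y| : ℤ) : ℝ) with hMdef
      have hM2 : (2:ℝ) ≤ M := by rw [hMdef]; exact_mod_cast hmax
      have hM0 : (0:ℝ) ≤ M := by linarith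
      have hmNr : (|m| : ℝ) ≤ (N : ℝ) := by exact_mod_cast hmN
      have habs0 : (0:ℝ) ≤ (|m| : ℝ) := by positivity
      have hMn : M ^ n ≤ (N:ℝ) ^ θ :=
        le_trans hkey (Real.rpow_le_rpow habs0 hmNr hθ.le)
      have hnd : d ≤ n := hn
      have hnpos : (0:ℝ) < (n:ℝ) := by
        have : 0 < n := lt_of_lt_of_le (by omega) hnd
        exact_mod_cast this
      -- n ≤ D
      have hnD : n ≤ D := by
        have h2M : (2:ℝ) ^ n ≤ M ^ n := pow_le_pow_left₀ (by norm_num) hM2 n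
        have h2n : (2:ℝ) ^ n ≤ (N:ℝ) ^ θ := le_trans h2M hMn
        have hlog : (n:ℝ) * Real.log 2 ≤ θ * Real.log N := by
          have := Real.log_le_log (by positivity) h2n
          rwa [Real.log_pow, Real.log_rpow hNpos] at this
        rw [hDdef]
        exact Nat.le_floor ((le_div_iff₀ hlog2).mpr hlog)
      -- max ≤ X
      have hMle : M ≤ (N:ℝ) ^ (θ / (d:ℝ)) := by
        have step := Real.rpow_le_rpow (pow_nonneg hM0 n) hMn
          (by positivity : (0:ℝ) ≤ ((n:ℝ))⁻¹)
        have hL : ((M ^ n : ℝ)) ^ ((n:ℝ)⁻¹) = M := by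
          rw [← Real.rpow_natCast M n, ← Real.rpow_mul hM0, mul_inv_cancel₀ hnpos.ne',
            Real.rpow_one]
        have hR : (((N:ℝ) ^ θ)) ^ ((n:ℝ)⁻¹) = (N:ℝ) ^ (θ / (n:ℝ)) := by
          rw [← Real.rpow_mul hNpos.le]; ring_nf
        rw [hL, hR] at step
        refine le_trans step (Real.rpow_le_rpow_of_exponent_le hN1 ?_)
        apply div_le_div_of_nonneg_left hθ.le hdpos
        exact_mod_cast hnd
      have hmaxX : max |x| |y| ≤ X := by
        rw [hXdef]; exact Int.le_floor.mpr hMle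
      have hxX : x ∈ Ix := by
        rw [hIxdef, Finset.mem_Icc]
        have : |x| ≤ X := le_trans (le_max_left _ _) hmaxX
        exact ⟨neg_le_of_abs_le this, le_of_abs_le this⟩
      have hyX : y ∈ Ix := by
        rw [hIxdef, Finset.mem_Icc]
        have : |y| ≤ X := le_trans (le_max_right _ _) hmaxX
        exact ⟨neg_le_of_abs_le this, le_of_abs_le this⟩
      refine Finset.mem_coe.mpr (Finset.mem_image.mpr ⟨(n, (a, b), (x, y)), ?_, hrep.symm⟩)
      rw [hTdef]
      refine Finset.mem_product.mpr ⟨Finset.mem_Icc.mpr ⟨hnd, hnD⟩, ?_⟩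
      refine Finset.mem_product.mpr ⟨?_, Finset.mem_product.mpr ⟨hxX, hyX⟩⟩
      rw [hAllEdef]
      exact Finset.mem_biUnion.mpr ⟨n, Finset.mem_Icc.mpr ⟨hnd, hnD⟩, hab⟩
  -- counting
  have hRle : (RCount E d N : ℝ) ≤ 3 + (T.card : ℝ) := by
    have hTfin : (↑(T.image f) : Set ℤ).Finite := (T.image f).finite_toSet
    have hfin3 : ({-1,0,1} : Set ℤ).Finite :=
      ((Set.finite_singleton (1:ℤ)).insert 0).insert (-1)
    have h1 : RCount E d N ≤ (({-1,0,1} : Set ℤ) ∪ ↑(T.image f)).ncard :=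
      Set.ncard_le_ncard hsub (hfin3.union hTfin)
    have h2 : (({-1,0,1} : Set ℤ) ∪ ↑(T.image f)).ncard
        ≤ ({-1,0,1} : Set ℤ).ncard + (↑(T.image f) : Set ℤ).ncard :=
      Set.ncard_union_le _ _
    have h3 : ({-1,0,1} : Set ℤ).ncard ≤ 3 := by
      refine le_trans (Set.ncard_insert_le _ _) ?_
      have h4 := Set.ncard_insert_le (0:ℤ) ({1} : Set ℤ)
      have h5 : ({1} : Set ℤ).ncard = 1 := Set.ncard_singleton 1
      omega
    have h6 : (↑(T.image f) : Set ℤ).ncard ≤ T.card := by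
      rw [Set.ncard_coe_finset]; exact Finset.card_image_le
    have h7 : RCount E d N ≤ 3 + T.card := by omega
    exact_mod_cast h7
  -- cardinality of T
  have hTcard : (T.card : ℝ) = ((Finset.Icc d D).card : ℝ) *
      ((AllE.card : ℝ) * ((Ix.card : ℝ) * (Ix.card : ℝ))) := by
    rw [hTdef, Finset.card_product, Finset.card_product, Finset.card_product]
    push_cast; ring
  have hIcc : ((Finset.Icc d D).card : ℝ) ≤ (D : ℝ) + 1 := by
    rw [Nat.card_Icc]
    have h1 : D + 1 - d ≤ D + 1 := Nat.sub_le _ _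
    calc ((D + 1 - d : ℕ) : ℝ) ≤ ((D + 1 : ℕ) : ℝ) := by exact_mod_cast h1
      _ = (D:ℝ) + 1 := by push_cast; ring
  have hIx : (Ix.card : ℝ) ≤ 3 * (N:ℝ) ^ (θ / (d:ℝ)) := by
    rw [hIxdef, Int.card_Icc]
    have h2 : ((X + 1 - -X).toNat : ℝ) = 2*(X:ℝ) + 1 := by
      have h0 : (0:ℤ) ≤ X + 1 - -X := by omega
      rw [← Int.cast_natCast (R := ℝ), Int.toNat_of_nonneg h0]
      push_cast; ring
    rw [h2]; linarith [hXle, hrpow1]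
  have hAllE : (AllE.card : ℝ) ≤ ((D:ℝ) + 1) * (C * Real.exp (δ * D)) := by
    have h1 : AllE.card ≤ ∑ n ∈ Finset.Icc d D, (E n).card := by
      rw [hAllEdef]; exact Finset.card_biUnion_le
    have h2 : (∑ n ∈ Finset.Icc d D, ((E n).card : ℝ))
        ≤ ∑ _n ∈ Finset.Icc d D, (C * Real.exp (δ * D)) := by
      apply Finset.sum_le_sum
      intro n hn
      have hnD : n ≤ D := (Finset.mem_Icc.mp hn).2
      have h3 := hCn n
      have hexp : Real.exp (δ * n) ≤ Real.exp (δ * D) :=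
        Real.exp_le_exp.mpr (mul_le_mul_of_nonneg_left (by exact_mod_cast hnD) hδ.le)
      have h4 : C * Real.exp (δ * n) ≤ C * Real.exp (δ * D) :=
        mul_le_mul_of_nonneg_left hexp hC0.le
      linarith
    have h3 : ∑ _n ∈ Finset.Icc d D, (C * Real.exp (δ * D))
        = ((Finset.Icc d D).card : ℝ) * (C * Real.exp (δ * D)) := by
      rw [Finset.sum_const, nsmul_eq_mul]
    have h4 : (0:ℝ) ≤ C * Real.exp (δ * D) := le_of_lt (mul_pos hC0 (Real.exp_pos _))
    have h5 : ((Finset.Icc d D).card : ℝ) * (C * Real.exp (δ * D))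
        ≤ ((D:ℝ) + 1) * (C * Real.exp (δ * D)) :=
      mul_le_mul_of_nonneg_right hIcc h4
    have h6 : (AllE.card : ℝ) ≤ ∑ n ∈ Finset.Icc d D, ((E n).card : ℝ) := by
      push_cast at h1 ⊢
      exact_mod_cast h1
    linarith
  -- exponential bound
  have hfloorD : (D:ℝ) ≤ θ * Real.log N / Real.log 2 := by
    rw [hDdef]; exact Nat.floor_le (by positivity)
  have hexpD : Real.exp (δ * D) ≤ (N:ℝ) ^ (ε / (4*(d:ℝ))) := by
    have h2 : δ * D ≤ ε / (4*(d:ℝ)) * Real.log N := by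
      have h1 := mul_le_mul_of_nonneg_left hfloorD hδ.le
      calc δ * D ≤ δ * (θ * Real.log N / Real.log 2) := h1
        _ = (δ * θ / Real.log 2) * Real.log N := by ring
        _ = ε / (4*(d:ℝ)) * Real.log N := by rw [hδθ]
    rw [Real.rpow_def_of_pos hNpos]
    exact Real.exp_le_exp.mpr (le_of_le_of_eq h2 (mul_comm _ _))
  -- bound on D + 1
  have hD1 : (D:ℝ) + 1 ≤ c₁ * (N:ℝ) ^ γ := by
    have h2 : Real.log N ≤ (N:ℝ) ^ γ / γ := Real.log_le_rpow_div hNpos.le hγ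
    have h3 : (1:ℝ) ≤ (N:ℝ) ^ γ := Real.one_le_rpow hN1 hγ.le
    have h4 : (θ / Real.log 2) * Real.log N ≤ (θ / Real.log 2) * ((N:ℝ)^γ / γ) :=
      mul_le_mul_of_nonneg_left h2 (div_nonneg hθ.le hlog2.le)
    have h5 : (θ / Real.log 2) * ((N:ℝ)^γ / γ) = θ / (γ * Real.log 2) * (N:ℝ)^γ := by
      field_simp
    have h6 : (θ / (γ * Real.log 2) + 1) * (N:ℝ)^γ
        = θ / (γ * Real.log 2) * (N:ℝ)^γ + (N:ℝ)^γ := by ring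
    have h7 : θ * Real.log N / Real.log 2 = (θ / Real.log 2) * Real.log N := by ring
    rw [hc₁def, h6]
    linarith [hfloorD]
  -- assembling
  have hApos : (0:ℝ) ≤ (D:ℝ) + 1 := by positivity
  have hA'pos : (0:ℝ) ≤ c₁ * (N:ℝ) ^ γ := mul_nonneg hc₁.le (Real.rpow_nonneg hNpos.le _)
  have hBpos : (0:ℝ) ≤ C * Real.exp (δ * D) := le_of_lt (mul_pos hC0 (Real.exp_pos _))
  have hB'pos : (0:ℝ) ≤ C * (N:ℝ) ^ (ε / (4*(d:ℝ))) :=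
    mul_nonneg hC0.le (Real.rpow_nonneg hNpos.le _)
  have hB : C * Real.exp (δ * D) ≤ C * (N:ℝ) ^ (ε / (4*(d:ℝ))) :=
    mul_le_mul_of_nonneg_left hexpD hC0.le
  have hIx0 : (0:ℝ) ≤ (Ix.card : ℝ) := Nat.cast_nonneg _
  have h3P0 : (0:ℝ) ≤ 3 * (N:ℝ) ^ (θ / (d:ℝ)) := by positivity
  -- product bound
  have hT1 : (T.card : ℝ) ≤ ((D:ℝ)+1) * ((((D:ℝ)+1) * (C * Real.exp (δ * D))) *
      ((3 * (N:ℝ) ^ (θ / (d:ℝ))) * (3 * (N:ℝ) ^ (θ / (d:ℝ))))) := by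
    rw [hTcard]
    have hIxIx : (Ix.card : ℝ) * (Ix.card : ℝ)
        ≤ (3 * (N:ℝ) ^ (θ / (d:ℝ))) * (3 * (N:ℝ) ^ (θ / (d:ℝ))) :=
      mul_le_mul hIx hIx hIx0 h3P0
    have hinner : (AllE.card : ℝ) * ((Ix.card : ℝ) * (Ix.card : ℝ))
        ≤ (((D:ℝ)+1) * (C * Real.exp (δ * D))) *
          ((3 * (N:ℝ) ^ (θ / (d:ℝ))) * (3 * (N:ℝ) ^ (θ / (d:ℝ)))) :=
      mul_le_mul hAllE hIxIx (mul_nonneg hIx0 hIx0) (mul_nonneg hApos hBpos)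
    exact mul_le_mul hIcc hinner
      (mul_nonneg (Nat.cast_nonneg _) (mul_nonneg hIx0 hIx0)) hApos
  have hT2 : ((D:ℝ)+1) * ((((D:ℝ)+1) * (C * Real.exp (δ * D))) *
      ((3 * (N:ℝ) ^ (θ / (d:ℝ))) * (3 * (N:ℝ) ^ (θ / (d:ℝ)))))
      ≤ (c₁ * (N:ℝ) ^ γ) * (((c₁ * (N:ℝ) ^ γ) * (C * (N:ℝ) ^ (ε / (4*(d:ℝ))))) *
      ((3 * (N:ℝ) ^ (θ / (d:ℝ))) * (3 * (N:ℝ) ^ (θ / (d:ℝ))))) := by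
    have hPP0 : (0:ℝ) ≤ (3 * (N:ℝ) ^ (θ / (d:ℝ))) * (3 * (N:ℝ) ^ (θ / (d:ℝ))) :=
      mul_nonneg h3P0 h3P0
    have hinner1 : ((D:ℝ)+1) * (C * Real.exp (δ * D))
        ≤ (c₁ * (N:ℝ) ^ γ) * (C * (N:ℝ) ^ (ε / (4*(d:ℝ)))) :=
      mul_le_mul hD1 hB hBpos hA'pos
    have hinner2 : (((D:ℝ)+1) * (C * Real.exp (δ * D))) *
        ((3 * (N:ℝ) ^ (θ / (d:ℝ))) * (3 * (N:ℝ) ^ (θ / (d:ℝ))))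
        ≤ ((c₁ * (N:ℝ) ^ γ) * (C * (N:ℝ) ^ (ε / (4*(d:ℝ))))) *
        ((3 * (N:ℝ) ^ (θ / (d:ℝ))) * (3 * (N:ℝ) ^ (θ / (d:ℝ)))) :=
      mul_le_mul_of_nonneg_right hinner1 hPP0
    exact mul_le_mul hD1 hinner2 (mul_nonneg (mul_nonneg hApos hBpos) hPP0) hA'pos
  -- collapse the rpow products
  have hcollapse : (c₁ * (N:ℝ) ^ γ) * (((c₁ * (N:ℝ) ^ γ) * (C * (N:ℝ) ^ (ε / (4*(d:ℝ))))) *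
      ((3 * (N:ℝ) ^ (θ / (d:ℝ))) * (3 * (N:ℝ) ^ (θ / (d:ℝ)))))
      = 9 * C * c₁ ^ 2 *
        ((N:ℝ) ^ γ * (N:ℝ) ^ γ * (N:ℝ) ^ (ε / (4*(d:ℝ))) * (N:ℝ) ^ (θ / (d:ℝ)) *
          (N:ℝ) ^ (θ / (d:ℝ))) := by ring
  have hsumpow : (N:ℝ) ^ γ * (N:ℝ) ^ γ * (N:ℝ) ^ (ε / (4*(d:ℝ))) * (N:ℝ) ^ (θ / (d:ℝ)) *
      (N:ℝ) ^ (θ / (d:ℝ))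
      = (N:ℝ) ^ (γ + γ + ε / (4*(d:ℝ)) + θ / (d:ℝ) + θ / (d:ℝ)) := by
    rw [← Real.rpow_add hNpos, ← Real.rpow_add hNpos, ← Real.rpow_add hNpos,
      ← Real.rpow_add hNpos]
  have he₁0 : 0 ≤ γ + γ + ε / (4*(d:ℝ)) + θ / (d:ℝ) + θ / (d:ℝ) := by
    have h1 : (0:ℝ) ≤ ε / (4*(d:ℝ)) := by positivity
    have h2 : (0:ℝ) ≤ θ / (d:ℝ) := by positivity
    linarith [hγ.le]
  have hone : (1:ℝ) ≤ (N:ℝ) ^ (γ + γ + ε / (4*(d:ℝ)) + θ / (d:ℝ) + θ / (d:ℝ)) :=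
    Real.one_le_rpow hN1 he₁0
  have hKstep : 3 + 9 * C * c₁ ^ 2 *
      (N:ℝ) ^ (γ + γ + ε / (4*(d:ℝ)) + θ / (d:ℝ) + θ / (d:ℝ))
      ≤ K * (N:ℝ) ^ (γ + γ + ε / (4*(d:ℝ)) + θ / (d:ℝ) + θ / (d:ℝ)) := by
    have hA0 : (0:ℝ) ≤ 9 * C * c₁ ^ 2 :=
      mul_nonneg (mul_nonneg (by norm_num) hC0.le) (sq_nonneg c₁)
    have h1 := mul_le_mul_of_nonneg_left hone hA0
    rw [hKdef, add_mul]
    linarith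
  have hKN' : K * (N:ℝ) ^ (γ + γ + ε / (4*(d:ℝ)) + θ / (d:ℝ) + θ / (d:ℝ))
      ≤ (N:ℝ) ^ (5 * ε / (8 * (d:ℝ))) *
        (N:ℝ) ^ (γ + γ + ε / (4*(d:ℝ)) + θ / (d:ℝ) + θ / (d:ℝ)) :=
    mul_le_mul_of_nonneg_right hKN (Real.rpow_nonneg hNpos.le _)
  have hfinalpow : (N:ℝ) ^ (5 * ε / (8 * (d:ℝ))) *
      (N:ℝ) ^ (γ + γ + ε / (4*(d:ℝ)) + θ / (d:ℝ) + θ / (d:ℝ))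
      = (N:ℝ) ^ ((2 * θ + ε) / (d:ℝ)) := by
    rw [← Real.rpow_add hNpos]
    congr 1
    rw [hγdef]
    field_simp
    ring
  calc (RCount E d N : ℝ) ≤ 3 + (T.card : ℝ) := hRle
    _ ≤ 3 + 9 * C * c₁ ^ 2 *
        (N:ℝ) ^ (γ + γ + ε / (4*(d:ℝ)) + θ / (d:ℝ) + θ / (d:ℝ)) := by
      have := le_trans hT1 hT2
      rw [hcollapse, hsumpow] at this
      linarith
    _ ≤ K * (N:ℝ) ^ (γ + γ + ε / (4*(d:ℝ)) + θ / (d:ℝ) + θ / (d:ℝ)) := hKstep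
    _ ≤ (N:ℝ) ^ (5 * ε / (8 * (d:ℝ))) *
        (N:ℝ) ^ (γ + γ + ε / (4*(d:ℝ)) + θ / (d:ℝ) + θ / (d:ℝ)) := hKN'
    _ = (N:ℝ) ^ ((2 * θ + ε) / (d:ℝ)) := hfinalpow
end

section
/- Let d ≥ 3 be an integer and let a, b, a', b' be nonzero integers. The binary forms a·X^d + b·Y^d and a'·X^d + b'·Y^d are isomorphic under the GL(2,ℚ) action if and only if at least one of the following two conditions holds: (1) both ratios a/a' and b/b' are d-th powers of rational numbers; (2) both ratios a/b' and b/a' are d-th powers of rational numbers. -/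
open MvPolynomial

/-- The action of a matrix `γ = (a₁ a₂; a₃ a₄)` on a binary form `F`:
`(F ∘ γ)(X, Y) = F(a₁X + a₂Y, a₃X + a₄Y)`. -/
noncomputable def formComp (γ : Matrix (Fin 2) (Fin 2) ℚ) (f : MvPolynomial (Fin 2) ℚ) :
    MvPolynomial (Fin 2) ℚ :=
  MvPolynomial.bind₁ (fun i => C (γ i 0) * X 0 + C (γ i 1) * X 1) f

/-- Two binary forms `F` and `G` are isomorphic if there exists `γ ∈ GL(2,ℚ)` with
`F ∘ γ = G`. -/
def IsIsomorphicForm (f g : MvPolynomial (Fin 2) ℚ) : Prop :=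
  ∃ γ : Matrix (Fin 2) (Fin 2) ℚ, γ.det ≠ 0 ∧ formComp γ f = g

/-- The binomial binary form `a X^d + b Y^d` (viewed over `ℚ`). -/
noncomputable def binomialForm (d : ℕ) (a b : ℤ) : MvPolynomial (Fin 2) ℚ :=
  C (a : ℚ) * X 0 ^ d + C (b : ℚ) * X 1 ^ d

/-! Write `γ = (p q; r s)`. Setting `Y = 1` in `a(pX + qY)^d + b(rX + sY)^d = a'X^d + b'Y^d`,
the coefficients of `X^(d-1)` and `X^(d-2)` vanish because `d ≥ 3`:
`a p^(d-1) q + b r^(d-1) s = 0` and `a p^(d-2) q² + b r^(d-2) s² = 0`. Eliminating gives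
`a p^(d-2) q (ps - qr) = 0 = b r^(d-2) s (ps - qr)`, so `pq = rs = 0` and `γ` is diagonal or
antidiagonal. The leading and constant coefficients then read `a' = a p^d, b' = b s^d`, or
`a' = b r^d, b' = a q^d`. -/

theorem Polynomial.coeff_C_mul_X_add_C_pow {R : Type*} [CommSemiring R] (p q : R) (n k : ℕ) :
    ((C p * X + C q) ^ n).coeff k = p ^ k * q ^ (n - k) * n.choose k := by
  simp_rw [add_pow, finsetSum_coeff, mul_pow, ← C_pow, ← C_eq_natCast, mul_comm (C _) (X ^ _),
    mul_assoc, ← C_mul, coeff_X_pow_mul']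
  rw [Finset.sum_eq_single k]
  · rw [if_pos le_rfl, Nat.sub_self, coeff_C_zero]
  · intro i _ hik
    split_ifs with hi
    · exact coeff_C_of_ne_zero (by omega)
    · rfl
  · intro hk
    rw [Finset.mem_range, not_lt] at hk
    simp [Nat.choose_eq_zero_of_lt hk]

theorem formComp_binomial (γ : Matrix (Fin 2) (Fin 2) ℚ) (α β : ℚ) (d : ℕ) :
    formComp γ (C α * X 0 ^ d + C β * X 1 ^ d) =
      C α * (C (γ 0 0) * X 0 + C (γ 0 1) * X 1) ^ d +
        C β * (C (γ 1 0) * X 0 + C (γ 1 1) * X 1) ^ d := by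
  simp [formComp]

theorem formComp_diagonal_binomial (t u α β : ℚ) (d : ℕ) :
    formComp !![t, 0; 0, u] (C α * X 0 ^ d + C β * X 1 ^ d) =
      C (α * t ^ d) * X 0 ^ d + C (β * u ^ d) * X 1 ^ d := by
  simp [formComp_binomial, mul_pow, mul_assoc]

theorem formComp_antidiagonal_binomial (t u α β : ℚ) (d : ℕ) :
    formComp !![0, t; u, 0] (C α * X 0 ^ d + C β * X 1 ^ d) =
      C (β * u ^ d) * X 0 ^ d + C (α * t ^ d) * X 1 ^ d := by
  simp [formComp_binomial, mul_pow, mul_assoc, add_comm]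

theorem aeval_formComp_binomial (γ : Matrix (Fin 2) (Fin 2) ℚ) (α β : ℚ) (d : ℕ) :
    aeval ![Polynomial.X, 1] (formComp γ (C α * X 0 ^ d + C β * X 1 ^ d)) =
      Polynomial.C α * (Polynomial.C (γ 0 0) * Polynomial.X + Polynomial.C (γ 0 1)) ^ d +
        Polynomial.C β * (Polynomial.C (γ 1 0) * Polynomial.X + Polynomial.C (γ 1 1)) ^ d := by
  simp [formComp_binomial, Polynomial.C_eq_algebraMap]

theorem aeval_binomial (α β : ℚ) (d : ℕ) :
    aeval ![Polynomial.X, 1] (C α * X 0 ^ d + C β * X 1 ^ d) =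
      Polynomial.C α * Polynomial.X ^ d + Polynomial.C β := by
  simp [Polynomial.C_eq_algebraMap]

theorem Polynomial.coeff_eqs_of_C_mul_linear_pow_add {K : Type*} [Field K] [CharZero K] {n : ℕ}
    (hn : n ≠ 0) {α β α' β' p q r s : K}
    (h : C α * (C p * X + C q) ^ (n + 2) + C β * (C r * X + C s) ^ (n + 2) =
      C α' * X ^ (n + 2) + C β') :
    α * p ^ (n + 2) + β * r ^ (n + 2) = α' ∧ α * q ^ (n + 2) + β * s ^ (n + 2) = β' ∧
      α * p ^ (n + 1) * q + β * r ^ (n + 1) * s = 0 ∧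
      α * p ^ n * q ^ 2 + β * r ^ n * s ^ 2 = 0 := by
  have coeff_eq (k : ℕ) : (α * p ^ k * q ^ (n + 2 - k) + β * r ^ k * s ^ (n + 2 - k)) *
      (n + 2).choose k = (C α' * X ^ (n + 2) + C β').coeff k := by
    rw [← h]
    simp only [coeff_add, coeff_C_mul, coeff_C_mul_X_add_C_pow]
    ring
  have coeff_eq_zero {k : ℕ} (h0 : k ≠ 0) (hk : k < n + 2) :
      α * p ^ k * q ^ (n + 2 - k) + β * r ^ k * s ^ (n + 2 - k) = 0 := by
    have := coeff_eq k
    rw [coeff_add, coeff_C_mul_X_pow, coeff_C, if_neg hk.ne, if_neg h0, add_zero] at this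
    exact (mul_eq_zero.mp this).resolve_right (Nat.cast_ne_zero.mpr (Nat.choose_pos hk.le).ne')
  refine ⟨by simpa using coeff_eq (n + 2), by simpa using coeff_eq 0, ?_, ?_⟩
  · simpa [show n + 2 - (n + 1) = 1 by omega] using coeff_eq_zero n.succ_ne_zero (by omega)
  · simpa using coeff_eq_zero hn (by omega)

theorem diagonal_or_antidiagonal_of_eq_zero {R : Type*} [CommRing R] [IsDomain R] {n : ℕ}
    {α β p q r s : R} (hα : α ≠ 0) (hβ : β ≠ 0) (hdet : p * s - q * r ≠ 0)
    (h₁ : α * p ^ (n + 1) * q + β * r ^ (n + 1) * s = 0)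
    (h₂ : α * p ^ n * q ^ 2 + β * r ^ n * s ^ 2 = 0) :
    (q = 0 ∧ r = 0) ∨ (p = 0 ∧ s = 0) := by
  have hpq : p * q = 0 := by
    have : α * p ^ n * q * (p * s - q * r) = 0 := by linear_combination s * h₁ - r * h₂
    by_contra hpq
    obtain ⟨hp, hq⟩ := mul_ne_zero_iff.mp hpq
    exact mul_ne_zero (mul_ne_zero (mul_ne_zero hα (pow_ne_zero n hp)) hq) hdet this
  have hrs : r * s = 0 := by
    have : β * r ^ n * s * (p * s - q * r) = 0 := by linear_combination p * h₂ - q * h₁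
    by_contra hrs
    obtain ⟨hr, hs⟩ := mul_ne_zero_iff.mp hrs
    exact mul_ne_zero (mul_ne_zero (mul_ne_zero hβ (pow_ne_zero n hr)) hs) hdet this
  rcases mul_eq_zero.mp hpq with hp | hq <;> rcases mul_eq_zero.mp hrs with hr | hs <;>
    simp_all

theorem exists_mul_pow_eq_of_isIsomorphicForm_binomial {d : ℕ} (hd : 3 ≤ d)
    {α β α' β' : ℚ} (hα : α ≠ 0) (hβ : β ≠ 0)
    (h : IsIsomorphicForm (C α * X 0 ^ d + C β * X 1 ^ d)
      (C α' * X 0 ^ d + C β' * X 1 ^ d)) :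
    ((∃ t, α * t ^ d = α') ∧ ∃ u, β * u ^ d = β') ∨
      ((∃ t, α * t ^ d = β') ∧ ∃ u, β * u ^ d = α') := by
  obtain ⟨γ, hγ, h⟩ := h
  obtain ⟨n, rfl⟩ : ∃ n, d = n + 2 := ⟨d - 2, by omega⟩
  have h' := congrArg (aeval ![(Polynomial.X : Polynomial ℚ), 1]) h
  rw [aeval_formComp_binomial, aeval_binomial] at h'
  obtain ⟨hα', hβ', h₁, h₂⟩ := Polynomial.coeff_eqs_of_C_mul_linear_pow_add (by omega) h'
  rw [Matrix.det_fin_two] at hγ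
  rcases diagonal_or_antidiagonal_of_eq_zero hα hβ hγ h₁ h₂ with ⟨hq, hr⟩ | ⟨hp, hs⟩
  · exact .inl ⟨⟨γ 0 0, by simpa [hr] using hα'⟩, γ 1 1, by simpa [hq] using hβ'⟩
  · exact .inr ⟨⟨γ 0 1, by simpa [hs] using hβ'⟩, γ 1 0, by simpa [hp] using hα'⟩

theorem isIsomorphicForm_binomial_of_mul_pow_eq {d : ℕ} (hd : d ≠ 0) {α β α' β' t u : ℚ}
    (hα' : α' ≠ 0) (hβ' : β' ≠ 0) (ht : α * t ^ d = α') (hu : β * u ^ d = β') :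
    IsIsomorphicForm (C α * X 0 ^ d + C β * X 1 ^ d) (C α' * X 0 ^ d + C β' * X 1 ^ d) := by
  have ht0 : t ≠ 0 := ne_zero_pow hd (right_ne_zero_of_mul (ht ▸ hα'))
  have hu0 : u ≠ 0 := ne_zero_pow hd (right_ne_zero_of_mul (hu ▸ hβ'))
  refine ⟨!![t, 0; 0, u], by simp [ht0, hu0], ?_⟩
  rw [formComp_diagonal_binomial, ht, hu]

theorem isIsomorphicForm_binomial_of_mul_pow_eq_swap {d : ℕ} (hd : d ≠ 0)
    {α β α' β' t u : ℚ} (hα' : α' ≠ 0) (hβ' : β' ≠ 0) (ht : α * t ^ d = β') (hu : β * u ^ d = α') :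
    IsIsomorphicForm (C α * X 0 ^ d + C β * X 1 ^ d) (C α' * X 0 ^ d + C β' * X 1 ^ d) := by
  have ht0 : t ≠ 0 := ne_zero_pow hd (right_ne_zero_of_mul (ht ▸ hβ'))
  have hu0 : u ≠ 0 := ne_zero_pow hd (right_ne_zero_of_mul (hu ▸ hα'))
  refine ⟨!![0, t; u, 0], by simp [ht0, hu0], ?_⟩
  rw [formComp_antidiagonal_binomial, ht, hu]

theorem exists_div_eq_pow_iff_exists_mul_pow_eq {K : Type*} [Field K] {a a' : K} (ha : a ≠ 0)
    (d : ℕ) : (∃ r, a / a' = r ^ d) ↔ ∃ t, a * t ^ d = a' := by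
  constructor
  · rintro ⟨r, hr⟩
    exact ⟨r⁻¹, by rw [inv_pow, ← hr, inv_div, mul_div_cancel₀ _ ha]⟩
  · rintro ⟨t, rfl⟩
    exact ⟨t⁻¹, by rw [div_mul_cancel_left₀ ha, inv_pow]⟩

/-- Proposition 3.1: for `d ≥ 3` and nonzero integers `a, b, a', b'`, the forms
`a X^d + b Y^d` and `a' X^d + b' Y^d` are `GL(2,ℚ)`-isomorphic if and only if either both
`a/a'` and `b/b'`, or both `a/b'` and `b/a'`, are `d`-th powers of rational numbers. -/
theorem binomialForm_isomorphic_iff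
    (d : ℕ) (hd : 3 ≤ d) (a b a' b' : ℤ)
    (ha : a ≠ 0) (hb : b ≠ 0) (ha' : a' ≠ 0) (hb' : b' ≠ 0) :
    IsIsomorphicForm (binomialForm d a b) (binomialForm d a' b') ↔
      ((∃ r : ℚ, (a : ℚ) / (a' : ℚ) = r ^ d) ∧ (∃ r : ℚ, (b : ℚ) / (b' : ℚ) = r ^ d)) ∨
      ((∃ r : ℚ, (a : ℚ) / (b' : ℚ) = r ^ d) ∧ (∃ r : ℚ, (b : ℚ) / (a' : ℚ) = r ^ d)) := by
  have hd₀ : d ≠ 0 := by omega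
  have ha₀ : (a : ℚ) ≠ 0 := by exact_mod_cast ha
  have hb₀ : (b : ℚ) ≠ 0 := by exact_mod_cast hb
  have ha'₀ : (a' : ℚ) ≠ 0 := by exact_mod_cast ha'
  have hb'₀ : (b' : ℚ) ≠ 0 := by exact_mod_cast hb'
  simp only [exists_div_eq_pow_iff_exists_mul_pow_eq ha₀,
    exists_div_eq_pow_iff_exists_mul_pow_eq hb₀]
  constructor
  · exact exists_mul_pow_eq_of_isIsomorphicForm_binomial hd ha₀ hb₀
  · rintro (⟨⟨t, ht⟩, u, hu⟩ | ⟨⟨t, ht⟩, u, hu⟩)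
    · exact isIsomorphicForm_binomial_of_mul_pow_eq hd₀ ha'₀ hb'₀ ht hu
    · exact isIsomorphicForm_binomial_of_mul_pow_eq_swap hd₀ ha'₀ hb'₀ ht hu
end

section
/- Let d and d' be integers with d, d' ≥ 3, and suppose each set 𝓔_e (e ≥ 3) is a finite subset of (ℤ∖{0}) × (ℤ∖{0}) satisfying conditions (C1) and (C2). If (a,b) ∈ 𝓔_d and (a',b') ∈ 𝓔_{d'} are such that the binary forms a·X^d + b·Y^d and a'·X^{d'} + b'·Y^{d'} are isomorphic under the GL(2,ℚ) action, then d = d' and (a,b) = (a',b'). -/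
open MvPolynomial

/-!
Write `γ = (p q; r s)`. The coefficient of `X^i Y^j` (`i + j = d`) in `(aX^d + bY^d) ∘ γ` is
`C(d,i) (a p^i q^j + b r^i s^j)`. The target form has no mixed monomials, and for `d ≥ 3` the two
vanishing coefficients of `X^(d-1) Y` and `X^(d-2) Y^2` force, since `ps - qr ≠ 0`, that `γ` is
diagonal or antidiagonal. Then the transformed form is `a p^d X^d + b s^d Y^d`, resp.
`b r^d X^d + a q^d Y^d`, so `d = d'` and the two coefficient pairs differ by `d`-th powers as
excluded by (C1), resp. (C2), unless they are equal.
-/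

open Finset

section BinaryForms
variable {R : Type*} [CommSemiring R]

theorem single_add_single_inj {k l i j : ℕ} :
    Finsupp.single (0 : Fin 2) k + Finsupp.single 1 l = Finsupp.single 0 i + Finsupp.single 1 j ↔
      k = i ∧ l = j := by
  constructor
  · intro h
    exact ⟨by simpa using DFunLike.congr_fun h 0, by simpa using DFunLike.congr_fun h 1⟩
  · rintro ⟨rfl, rfl⟩; rfl

theorem linearForm_pow_eq_sum (u v : R) (d : ℕ) :
    (C u * X 0 + C v * X 1 : MvPolynomial (Fin 2) R) ^ d =
      ∑ k ∈ range (d + 1), monomial (Finsupp.single 0 k + Finsupp.single 1 (d - k))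
        (u ^ k * v ^ (d - k) * d.choose k) := by
  rw [add_pow]
  refine sum_congr rfl fun k _ => ?_
  rw [mul_pow, mul_pow, ← C_pow, ← C_pow, X_pow_eq_monomial, X_pow_eq_monomial, C_mul_monomial,
    C_mul_monomial, monomial_mul, ← map_natCast (C : R →+* MvPolynomial (Fin 2) R), mul_comm,
    C_mul_monomial]
  congr 1
  ring

theorem coeff_linearForm_pow (u v : R) (d i j : ℕ) :
    coeff (Finsupp.single 0 i + Finsupp.single 1 j)
        ((C u * X 0 + C v * X 1 : MvPolynomial (Fin 2) R) ^ d) =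
      if i + j = d then u ^ i * v ^ j * d.choose i else 0 := by
  simp only [linearForm_pow_eq_sum, coeff_sum, coeff_monomial, single_add_single_inj]
  split_ifs with h
  · rw [sum_eq_single_of_mem i (by simp; omega) (fun k _ hk => if_neg fun h' => hk h'.1),
      if_pos ⟨rfl, by omega⟩, ← h, Nat.add_sub_cancel_left]
  · exact sum_eq_zero fun k hk => if_neg fun ⟨hki, hkj⟩ => h (by simp at hk; omega)

theorem coeff_C_mul_X_pow_add_C_mul_X_pow (u v : R) (d i j : ℕ) :
    coeff (Finsupp.single 0 i + Finsupp.single 1 j)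
        (C u * X 0 ^ d + C v * X 1 ^ d : MvPolynomial (Fin 2) R) =
      (if d = i ∧ 0 = j then u else 0) + (if 0 = i ∧ d = j then v else 0) := by
  have h0 : Finsupp.single (0 : Fin 2) d = Finsupp.single 0 d + Finsupp.single 1 0 := by simp
  have h1 : Finsupp.single (1 : Fin 2) d = Finsupp.single 0 0 + Finsupp.single 1 d := by simp
  rw [X_pow_eq_monomial, X_pow_eq_monomial, coeff_add, coeff_C_mul, coeff_C_mul, coeff_monomial,
    coeff_monomial, h0, h1]
  simp only [single_add_single_inj, mul_ite, mul_one, mul_zero]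

theorem eq_of_C_mul_X_pow_add_C_mul_X_pow_eq {u v u' v' : R} {d d' : ℕ} (hu : u ≠ 0)
    (hd : d ≠ 0) (h : (C u * X 0 ^ d + C v * X 1 ^ d : MvPolynomial (Fin 2) R) =
      C u' * X 0 ^ d' + C v' * X 1 ^ d') :
    d = d' ∧ u = u' ∧ v = v' := by
  have hX := congrArg (coeff (Finsupp.single 0 d + Finsupp.single 1 0)) h
  have hY := congrArg (coeff (Finsupp.single 0 0 + Finsupp.single 1 d)) h
  simp only [coeff_C_mul_X_pow_add_C_mul_X_pow] at hX hY
  obtain rfl : d' = d := by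
    by_contra hne
    simp [hd.symm, hne, hu] at hX
  simpa [hd] using And.intro hX hY

end BinaryForms

theorem diagonal_or_antidiagonal_of_mixed_terms_eq_zero {K : Type*} [Field K] {a b p q r s : K}
    (n : ℕ) (ha : a ≠ 0) (hb : b ≠ 0) (hdet : p * s - q * r ≠ 0)
    (h₁ : a * (p ^ (n + 2) * q) + b * (r ^ (n + 2) * s) = 0)
    (h₂ : a * (p ^ (n + 1) * q ^ 2) + b * (r ^ (n + 1) * s ^ 2) = 0) :
    (q = 0 ∧ r = 0) ∨ (p = 0 ∧ s = 0) := by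
  have hpq : a * p ^ (n + 1) * q * (p * s - q * r) = 0 := by linear_combination s * h₁ - r * h₂
  have hrs : b * r ^ (n + 1) * s * (p * s - q * r) = 0 := by linear_combination p * h₂ - q * h₁
  simp only [mul_eq_zero, pow_eq_zero_iff n.succ_ne_zero, ha, hb, hdet, false_or, or_false]
    at hpq hrs
  rcases hpq with rfl | rfl <;> rcases hrs with rfl | rfl <;> simp_all

theorem formComp_binomialForm (γ : Matrix (Fin 2) (Fin 2) ℚ) (d : ℕ) (a b : ℤ) :
    formComp γ (binomialForm d a b) =
      C (a : ℚ) * (C (γ 0 0) * X 0 + C (γ 0 1) * X 1) ^ d +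
        C (b : ℚ) * (C (γ 1 0) * X 0 + C (γ 1 1) * X 1) ^ d := by
  simp [formComp, binomialForm]

theorem coeff_formComp_binomialForm (γ : Matrix (Fin 2) (Fin 2) ℚ) (d : ℕ) (a b : ℤ)
    (i j : ℕ) :
    coeff (Finsupp.single 0 i + Finsupp.single 1 j) (formComp γ (binomialForm d a b)) =
      if i + j = d then (a * (γ 0 0 ^ i * γ 0 1 ^ j) + b * (γ 1 0 ^ i * γ 1 1 ^ j)) * d.choose i
      else 0 := by
  rw [formComp_binomialForm, coeff_add, coeff_C_mul, coeff_C_mul, coeff_linearForm_pow,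
    coeff_linearForm_pow]
  split_ifs <;> ring

theorem formComp_binomialForm_of_diagonal {γ : Matrix (Fin 2) (Fin 2) ℚ} (h01 : γ 0 1 = 0)
    (h10 : γ 1 0 = 0) (d : ℕ) (a b : ℤ) :
    formComp γ (binomialForm d a b) =
      C (a * γ 0 0 ^ d) * X 0 ^ d + C (b * γ 1 1 ^ d) * X 1 ^ d := by
  simp [formComp_binomialForm, h01, h10, mul_pow, ← mul_assoc]

theorem formComp_binomialForm_of_antidiagonal {γ : Matrix (Fin 2) (Fin 2) ℚ} (h00 : γ 0 0 = 0)
    (h11 : γ 1 1 = 0) (d : ℕ) (a b : ℤ) :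
    formComp γ (binomialForm d a b) =
      C (b * γ 1 0 ^ d) * X 0 ^ d + C (a * γ 0 1 ^ d) * X 1 ^ d := by
  simp [formComp_binomialForm, h00, h11, mul_pow, ← mul_assoc, add_comm]

theorem isDPow_div_mul_pow {x : ℚ} (hx : x ≠ 0) (t : ℚ) (d : ℕ) :
    IsDPow d (x / (x * t ^ d)) :=
  ⟨t⁻¹, by rw [inv_pow, div_mul_cancel_left₀ hx]⟩

theorem CondC1.eq_of_isDPow {d : ℕ} {E : Finset (ℤ × ℤ)} (hE : CondC1 d E)
    {p p' : ℤ × ℤ} (hp : p ∈ E) (hp' : p' ∈ E)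
    (h₁ : IsDPow d ((p.1 : ℚ) / (p'.1 : ℚ))) (h₂ : IsDPow d ((p.2 : ℚ) / (p'.2 : ℚ))) :
    p = p' := by
  by_contra hne
  exact (hE p hp p' hp' hne).elim (· h₁) (· h₂)

theorem CondC2.eq_of_isDPow {d : ℕ} {E : Finset (ℤ × ℤ)} (hE : CondC2 d E)
    {p p' : ℤ × ℤ} (hp : p ∈ E) (hp' : p' ∈ E)
    (h₁ : IsDPow d ((p.1 : ℚ) / (p'.2 : ℚ))) (h₂ : IsDPow d ((p.2 : ℚ) / (p'.1 : ℚ))) :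
    p = p' := by
  by_contra hne
  exact (hE p hp p' hp' hne).elim (· h₁) (· h₂)

theorem binomialForm_isomorphic_eq_general
    (E : ℕ → Finset (ℤ × ℤ))
    (hnz : ∀ e : ℕ, 3 ≤ e → ∀ p ∈ E e, p.1 ≠ 0 ∧ p.2 ≠ 0)
    (hC1 : ∀ e : ℕ, 3 ≤ e → CondC1 e (E e))
    (hC2 : ∀ e : ℕ, 3 ≤ e → CondC2 e (E e))
    (d d' : ℕ) (hd : 3 ≤ d)
    (a b a' b' : ℤ) (hab : (a, b) ∈ E d) (hab' : (a', b') ∈ E d')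
    (hiso : IsIsomorphicForm (binomialForm d a b) (binomialForm d' a' b')) :
    d = d' ∧ a = a' ∧ b = b' := by
  obtain ⟨γ, hdet, hγ⟩ := hiso
  rw [Matrix.det_fin_two] at hdet
  obtain ⟨ha, hb⟩ : (a : ℚ) ≠ 0 ∧ (b : ℚ) ≠ 0 := by exact_mod_cast hnz d hd _ hab
  obtain ⟨n, rfl⟩ : ∃ n, d = n + 3 := ⟨d - 3, by omega⟩
  -- the target form has no mixed monomials, whatever `d'` is
  have hmixed : ∀ i j, i ≠ 0 → j ≠ 0 → i + j = n + 3 →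
      a * (γ 0 0 ^ i * γ 0 1 ^ j) + b * (γ 1 0 ^ i * γ 1 1 ^ j) = 0 := by
    intro i j hi hj hij
    have h := congrArg (coeff (Finsupp.single 0 i + Finsupp.single 1 j)) hγ
    rw [coeff_formComp_binomialForm, if_pos hij, binomialForm, coeff_C_mul_X_pow_add_C_mul_X_pow,
      if_neg (by tauto), if_neg (by tauto), add_zero] at h
    exact (mul_eq_zero.mp h).resolve_right (by exact_mod_cast (Nat.choose_pos (by omega)).ne')
  have h₁ := hmixed (n + 2) 1 (by omega) one_ne_zero (by omega)
  have h₂ := hmixed (n + 1) 2 (by omega) two_ne_zero (by omega)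
  rw [pow_one, pow_one] at h₁
  rcases diagonal_or_antidiagonal_of_mixed_terms_eq_zero n ha hb hdet h₁ h₂ with
    ⟨h01, h10⟩ | ⟨h00, h11⟩
  · rw [formComp_binomialForm_of_diagonal h01 h10, binomialForm] at hγ
    have hp : γ 0 0 ≠ 0 := fun h => hdet (by simp [h, h10])
    obtain ⟨rfl, ha', hb'⟩ :=
      eq_of_C_mul_X_pow_add_C_mul_X_pow_eq (mul_ne_zero ha (pow_ne_zero _ hp)) (by omega) hγ
    refine ⟨rfl, Prod.ext_iff.mp ((hC1 _ hd).eq_of_isDPow hab hab' ?_ ?_)⟩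
    · simpa only [← ha'] using isDPow_div_mul_pow ha (γ 0 0) (n + 3)
    · simpa only [← hb'] using isDPow_div_mul_pow hb (γ 1 1) (n + 3)
  · rw [formComp_binomialForm_of_antidiagonal h00 h11, binomialForm] at hγ
    have hr : γ 1 0 ≠ 0 := fun h => hdet (by simp [h, h00])
    obtain ⟨rfl, ha', hb'⟩ :=
      eq_of_C_mul_X_pow_add_C_mul_X_pow_eq (mul_ne_zero hb (pow_ne_zero _ hr)) (by omega) hγ
    refine ⟨rfl, Prod.ext_iff.mp ((hC2 _ hd).eq_of_isDPow hab hab' ?_ ?_)⟩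
    · simpa only [← hb'] using isDPow_div_mul_pow ha (γ 0 1) (n + 3)
    · simpa only [← ha'] using isDPow_div_mul_pow hb (γ 1 0) (n + 3)

/-- Corollary 3.2: within a family of binomial forms whose coefficient sets satisfy
conditions (C1) and (C2), two `GL(2,ℚ)`-isomorphic forms are equal. -/
theorem binomialForm_isomorphic_eq
    (E : ℕ → Finset (ℤ × ℤ))
    (hnz : ∀ e : ℕ, 3 ≤ e → ∀ p ∈ E e, p.1 ≠ 0 ∧ p.2 ≠ 0)
    (hC1 : ∀ e : ℕ, 3 ≤ e → CondC1 e (E e))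
    (hC2 : ∀ e : ℕ, 3 ≤ e → CondC2 e (E e))
    (d d' : ℕ) (hd : 3 ≤ d) (hd' : 3 ≤ d')
    (a b a' b' : ℤ) (hab : (a, b) ∈ E d) (hab' : (a', b') ∈ E d')
    (hiso : IsIsomorphicForm (binomialForm d a b) (binomialForm d' a' b')) :
    d = d' ∧ a = a' ∧ b = b' :=
  binomialForm_isomorphic_eq_general E hnz hC1 hC2 d d' hd a b a' b' hab hab' hiso
end

section
/- Let ε > 0 and assume the abc conjecture holds for ε with constant κ(ε). Let d, a, b, x, y be integers with ab ≠ 0; set 𝒜 = max(|a|,|b|) and X = max(|x|,|y|). Suppose d ≥ 2, 𝒜 ≥ 2, X ≥ 2 and m := a·x^d + b·y^d ≠ 0. Then X^{d − 2 − 2ε} ≤ κ(ε)·𝒜^{1+2ε}·|m|^{1+ε}, where X^{d − 2 − 2ε} denotes the real power of X with exponent d − 2 − 2ε. -/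
/-!
Write `s = a x^d`, `t = b y^d` and let `g = gcd(s, t)`. The abc inequality for the coprime
triple `s/g + t/g = (s + t)/g`, combined with `rad(s/g) ≤ |a x|`, `rad(t/g) ≤ |b y|`,
`rad((s + t)/g) ≤ |m|/g` and `g ≤ g^{1+ε}`, gives `|a| X^d ≤ κ (|a b| X² |m|)^{1+ε}` when
`|y| ≤ |x| = X`; dividing by `|a| X^{2+2ε}` yields the bound. When `y = 0` the instance
`1 + 1 = 2` of abc, i.e. `κ 2^{1+ε} ≥ 2`, suffices.
-/

/-- The radical of a positive integer: the product of its distinct prime divisors. -/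
def rad (n : ℕ) : ℕ := ∏ p ∈ n.primeFactors, p

/-- The abc conjecture holds for `ε` with constant `κ`: for all pairwise coprime positive
integers `a, b, c` with `a + b = c`, one has `c ≤ κ · R(abc)^{1+ε}`. -/
def AbcHolds (ε κ : ℝ) : Prop :=
  ∀ a b c : ℕ, 0 < a → 0 < b → 0 < c →
    Nat.Coprime a b → Nat.Coprime a c → Nat.Coprime b c →
    a + b = c → (c : ℝ) ≤ κ * (rad (a * b * c) : ℝ) ^ (1 + ε)

open UniqueFactorizationMonoid

theorem rad_eq_radical (n : ℕ) : rad n = radical n :=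
  Nat.radical_eq_prod_primeFactors.symm

theorem Nat.radical_mul_pow_le {n k : ℕ} (hn : n ≠ 0) (hk : k ≠ 0) (d : ℕ) :
    radical (n * k ^ d) ≤ n * k :=
  Nat.le_of_dvd (by positivity) <| radical_mul_dvd.trans <|
    mul_dvd_mul radical_dvd_self (radical_pow_dvd.trans radical_dvd_self)

theorem rpow_sub_le_of_mul_rpow_le {ε κ α β p c e : ℝ} (hε : 0 ≤ ε) (hκ : 0 ≤ κ)
    (hα : 0 < α) (hβ : 0 ≤ β) (hp : 0 < p) (hc : 0 ≤ c)
    (h : α * p ^ e ≤ κ * (α * β * p ^ 2 * c) ^ (1 + ε)) :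
    p ^ (e - 2 - 2 * ε) ≤ κ * max α β ^ (1 + 2 * ε) * c ^ (1 + ε) := by
  have hsplit : (α * β * p ^ 2 * c) ^ (1 + ε) =
      α * p ^ (2 + 2 * ε) * (α ^ ε * β ^ (1 + ε) * c ^ (1 + ε)) := by
    rw [Real.mul_rpow (by positivity) hc, Real.mul_rpow (by positivity) (by positivity),
      Real.mul_rpow hα.le hβ, Real.rpow_add hα, Real.rpow_one, ← Real.rpow_natCast,
      ← Real.rpow_mul hp.le]
    push_cast
    ring_nf
  have hpe : p ^ e = p ^ (2 + 2 * ε) * p ^ (e - 2 - 2 * ε) := by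
    rw [← Real.rpow_add hp]; ring_nf
  have hmax : α ^ ε * β ^ (1 + ε) ≤ max α β ^ (1 + 2 * ε) := by
    rw [show 1 + 2 * ε = ε + (1 + ε) by ring, Real.rpow_add (hα.trans_le (le_max_left α β))]
    gcongr
    exacts [le_max_left α β, le_max_right α β]
  rw [hsplit, hpe, ← mul_assoc, mul_left_comm κ] at h
  calc p ^ (e - 2 - 2 * ε) ≤ κ * (α ^ ε * β ^ (1 + ε) * c ^ (1 + ε)) :=
        le_of_mul_le_mul_left h (by positivity)
    _ ≤ κ * max α β ^ (1 + 2 * ε) * c ^ (1 + ε) := by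
        rw [mul_assoc κ (max α β ^ _)]
        gcongr

namespace AbcHolds

variable {ε κ : ℝ}

theorem le_of_add_eq (habc : AbcHolds ε κ) {a b c : ℕ} (ha : 0 < a) (hb : 0 < b)
    (hab : a.Coprime b) (h : a + b = c) :
    (c : ℝ) ≤ κ * ((radical (a * b * c) : ℕ) : ℝ) ^ (1 + ε) := by
  subst h
  rw [← rad_eq_radical]
  exact habc a b (a + b) ha hb (by omega) hab (Nat.coprime_self_add_right.2 hab)
    (Nat.coprime_add_self_right.2 hab.symm) rfl

theorem two_le_mul (habc : AbcHolds ε κ) : 2 ≤ κ * 2 ^ (1 + ε) := by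
  have h := habc.le_of_add_eq (c := 2) one_pos one_pos (Nat.coprime_one_left 1) rfl
  rw [one_mul, one_mul, Nat.radical_eq_prod_primeFactors, Nat.prime_two.primeFactors,
    Finset.prod_singleton] at h
  exact_mod_cast h

theorem pos (habc : AbcHolds ε κ) : 0 < κ :=
  pos_of_mul_pos_left (two_pos.trans_le habc.two_le_mul) (by positivity)

theorem self_le_mul_rpow (habc : AbcHolds ε κ) (hε : 0 ≤ ε) {z n : ℝ} (hz : 2 ≤ z)
    (hn : 1 ≤ n) : n ≤ κ * (z * n) ^ (1 + ε) := by
  have hκz : 1 ≤ κ * z ^ (1 + ε) := by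
    grw [← hz]
    · linarith [habc.two_le_mul]
    · exact habc.pos.le
  calc n ≤ n ^ (1 + ε) := Real.self_le_rpow_of_one_le hn (by linarith)
    _ ≤ κ * z ^ (1 + ε) * n ^ (1 + ε) := le_mul_of_one_le_left (by positivity) hκz
    _ = κ * (z * n) ^ (1 + ε) := by rw [Real.mul_rpow (by linarith) (by linarith), mul_assoc]

theorem natAbs_le_of_gcd_eq_one (habc : AbcHolds ε κ) {s t : ℤ} (hs : s ≠ 0) (ht : t ≠ 0)
    (hst : s + t ≠ 0) (hcop : s.gcd t = 1) :
    (s.natAbs : ℝ) ≤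
      κ * ((radical (s.natAbs * t.natAbs * (s + t).natAbs) : ℕ) : ℝ) ^ (1 + ε) := by
  have hs' : 0 < s.natAbs := Int.natAbs_pos.2 hs
  have ht' : 0 < t.natAbs := Int.natAbs_pos.2 ht
  have hst' : 0 < (s + t).natAbs := Int.natAbs_pos.2 hst
  have hcop_s : s.natAbs.Coprime (s + t).natAbs := (Int.gcd_self_add_right s t).trans hcop
  have hcop_t : t.natAbs.Coprime (s + t).natAbs :=
    (Int.gcd_add_self_right t s).trans ((Int.gcd_comm t s).trans hcop)
  rcases (by omega : s.natAbs + t.natAbs = (s + t).natAbs ∨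
      s.natAbs + (s + t).natAbs = t.natAbs ∨ t.natAbs + (s + t).natAbs = s.natAbs)
    with h | h | h
  · exact (Nat.cast_le.2 (by omega)).trans (habc.le_of_add_eq hs' ht' hcop h)
  · have := habc.le_of_add_eq hs' hst' hcop_s h
    rw [mul_right_comm] at this
    exact (Nat.cast_le.2 (by omega)).trans this
  · have := habc.le_of_add_eq ht' hst' hcop_t h
    rwa [show t.natAbs * (s + t).natAbs * s.natAbs = s.natAbs * t.natAbs * (s + t).natAbs by
      ring] at this

theorem natAbs_le (habc : AbcHolds ε κ) (hε : 0 ≤ ε) {s t : ℤ} (hs : s ≠ 0) (ht : t ≠ 0)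
    (hst : s + t ≠ 0) :
    (s.natAbs : ℝ) ≤
      κ * ((radical s.natAbs * radical t.natAbs * (s + t).natAbs : ℕ) : ℝ) ^ (1 + ε) := by
  obtain ⟨g, u, v, hg, huv, rfl, rfl⟩ := Int.exists_gcd_one' (Int.gcd_pos_of_ne_zero_left t hs)
  have hu : u ≠ 0 := left_ne_zero_of_mul hs
  have hv : v ≠ 0 := left_ne_zero_of_mul ht
  rw [← add_mul] at hst ⊢
  have huv' : u + v ≠ 0 := left_ne_zero_of_mul hst
  simp only [Int.natAbs_mul, Int.natAbs_natCast]
  have hrad : radical (u.natAbs * v.natAbs * (u + v).natAbs) ≤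
      radical (u.natAbs * g) * radical (v.natAbs * g) * (u + v).natAbs :=
    Nat.le_of_dvd (by positivity) <|
      (radical_mul_dvd.trans (mul_dvd_mul_right radical_mul_dvd _)).trans <|
        mul_dvd_mul (mul_dvd_mul (radical_dvd_radical (dvd_mul_right _ _) (by positivity))
          (radical_dvd_radical (dvd_mul_right _ _) (by positivity))) radical_dvd_self
  have hg1 : (1 : ℝ) ≤ g := by exact_mod_cast hg
  calc ((u.natAbs * g : ℕ) : ℝ) = g * u.natAbs := by push_cast; ring
    _ ≤ g * (κ * ((radical (u.natAbs * v.natAbs * (u + v).natAbs) : ℕ) : ℝ) ^ (1 + ε)) :=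
      mul_le_mul_of_nonneg_left (habc.natAbs_le_of_gcd_eq_one hu hv huv' huv) (by positivity)
    _ ≤ g ^ (1 + ε) * (κ * ((radical (u.natAbs * g) * radical (v.natAbs * g) *
        (u + v).natAbs : ℕ) : ℝ) ^ (1 + ε)) := by
      have hκ := habc.pos.le
      gcongr ?_ * (κ * ?_ ^ _)
      · exact Real.self_le_rpow_of_one_le hg1 (by linarith)
      · exact_mod_cast hrad
    _ = _ := by
      rw [mul_left_comm, ← Real.mul_rpow (by positivity) (by positivity)]
      push_cast
      ring_nf

theorem natAbs_mul_pow_le (habc : AbcHolds ε κ) (hε : 0 ≤ ε) {d : ℕ} (hd : d ≠ 0)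
    {a b x y : ℤ} (ha : a ≠ 0) (hb : b ≠ 0) (hx : 2 ≤ x.natAbs)
    (hyx : y.natAbs ≤ x.natAbs)
    (hm : a * x ^ d + b * y ^ d ≠ 0) :
    (a.natAbs * x.natAbs ^ d : ℝ) ≤ κ * ((a.natAbs * b.natAbs * x.natAbs ^ 2 *
      (a * x ^ d + b * y ^ d).natAbs : ℕ) : ℝ) ^ (1 + ε) := by
  have hx0 : x ≠ 0 := by rintro rfl; simp at hx
  by_cases hy : y = 0
  · subst hy
    rw [zero_pow hd, mul_zero, add_zero] at hm ⊢
    have hab : 0 < a.natAbs * b.natAbs :=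
      Nat.mul_pos (Int.natAbs_pos.2 ha) (Int.natAbs_pos.2 hb)
    have hz : (2 : ℝ) ≤ (a.natAbs * b.natAbs * x.natAbs ^ 2 : ℕ) := by
      exact_mod_cast (by nlinarith : 2 ≤ x.natAbs ^ 2).trans (Nat.le_mul_of_pos_left _ hab)
    have hn : (1 : ℝ) ≤ (a * x ^ d).natAbs := by exact_mod_cast Int.natAbs_pos.2 hm
    simpa [Int.natAbs_mul, Int.natAbs_pow] using habc.self_le_mul_rpow hε hz hn
  · have key := habc.natAbs_le hε (mul_ne_zero ha (pow_ne_zero d hx0))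
      (mul_ne_zero hb (pow_ne_zero d hy)) hm
    simp only [Int.natAbs_mul, Int.natAbs_pow] at key
    have hrad : radical (a.natAbs * x.natAbs ^ d) * radical (b.natAbs * y.natAbs ^ d) ≤
        a.natAbs * b.natAbs * x.natAbs ^ 2 :=
      calc _ ≤ (a.natAbs * x.natAbs) * (b.natAbs * y.natAbs) := by
            gcongr <;> exact Nat.radical_mul_pow_le (by simpa) (by simpa) d
        _ ≤ (a.natAbs * x.natAbs) * (b.natAbs * x.natAbs) := by gcongr
        _ = a.natAbs * b.natAbs * x.natAbs ^ 2 := by ring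
    have hκ := habc.pos.le
    calc (a.natAbs * x.natAbs ^ d : ℝ) = ((a.natAbs * x.natAbs ^ d : ℕ) : ℝ) := by
          push_cast; rfl
      _ ≤ _ := key
      _ ≤ _ := by gcongr

theorem binomial_bound_of_abs_le (habc : AbcHolds ε κ) (hε : 0 ≤ ε) {d : ℕ} (hd : d ≠ 0)
    {a b x y : ℤ} (ha : a ≠ 0) (hb : b ≠ 0) (hx : 2 ≤ |x|) (hyx : |y| ≤ |x|)
    (hm : a * x ^ d + b * y ^ d ≠ 0) :
    ((|x| : ℤ) : ℝ) ^ ((d : ℝ) - 2 - 2 * ε)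
      ≤ κ * ((max |a| |b| : ℤ) : ℝ) ^ ((1 : ℝ) + 2 * ε) *
          ((|a * x ^ d + b * y ^ d| : ℤ) : ℝ) ^ ((1 : ℝ) + ε) := by
  rw [Int.abs_eq_natAbs, Int.abs_eq_natAbs] at hyx
  rw [Int.abs_eq_natAbs] at hx
  have key := habc.natAbs_mul_pow_le hε hd ha hb (by omega) (by omega) hm
  rw [← Real.rpow_natCast] at key
  push_cast at key
  simp only [Int.cast_max, ← Nat.cast_natAbs]
  exact rpow_sub_le_of_mul_rpow_le hε habc.pos.le (by simpa using ha) (by positivity)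
    (by exact_mod_cast (by omega : 0 < x.natAbs)) (by positivity) key

end AbcHolds

theorem abc_implies_binomial_bound_general
    (ε κ : ℝ) (hε : 0 < ε) (habc : AbcHolds ε κ)
    (d : ℕ) (a b x y : ℤ) (hd : 2 ≤ d) (hab : a * b ≠ 0)
    (hX : 2 ≤ max |x| |y|)
    (hm : a * x ^ d + b * y ^ d ≠ 0) :
    ((max |x| |y| : ℤ) : ℝ) ^ ((d : ℝ) - 2 - 2 * ε)
      ≤ κ * ((max |a| |b| : ℤ) : ℝ) ^ ((1 : ℝ) + 2 * ε) *
          ((|a * x ^ d + b * y ^ d| : ℤ) : ℝ) ^ ((1 : ℝ) + ε) := by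
  obtain ⟨ha, hb⟩ := mul_ne_zero_iff.1 hab
  have hd0 : d ≠ 0 := by omega
  rcases le_total |y| |x| with hyx | hxy
  · rw [max_eq_left hyx] at hX ⊢
    exact habc.binomial_bound_of_abs_le hε.le hd0 ha hb hX hyx hm
  · rw [max_eq_right hxy] at hX ⊢
    rw [add_comm (a * x ^ d)] at hm ⊢
    rw [max_comm |a|]
    exact habc.binomial_bound_of_abs_le hε.le hd0 hb ha hX hxy hm

/-- Lemma 7.2: assuming the abc conjecture for `ε` with constant `κ(ε)`, under the
hypotheses of Corollary 5.2 one has `X^{d-2-2ε} ≤ κ(ε) 𝒜^{1+2ε} |m|^{1+ε}`. -/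
theorem abc_implies_binomial_bound
    (ε κ : ℝ) (hε : 0 < ε) (hκ : 0 < κ) (habc : AbcHolds ε κ)
    (d : ℕ) (a b x y : ℤ) (hd : 2 ≤ d) (hab : a * b ≠ 0)
    (hA : 2 ≤ max |a| |b|) (hX : 2 ≤ max |x| |y|)
    (hm : a * x ^ d + b * y ^ d ≠ 0) :
    ((max |x| |y| : ℤ) : ℝ) ^ ((d : ℝ) - 2 - 2 * ε)
      ≤ κ * ((max |a| |b| : ℤ) : ℝ) ^ ((1 : ℝ) + 2 * ε) *
          ((|a * x ^ d + b * y ^ d| : ℤ) : ℝ) ^ ((1 : ℝ) + ε) :=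
  abc_implies_binomial_bound_general ε κ hε habc d a b x y hd hab hX hm
end

section
/- Let d ≥ 2 be an integer and let m be a nonzero integer. Then the number of pairs (x,y) ∈ ℤ² with x^d − y^d = m is at most 2·(d−1)·τ(|m|), where τ(|m|) denotes the number of positive divisors of |m|. In particular, for every ε > 0 there is a constant K (depending only on d and ε) such that this number of pairs is at most K·|m|^ε. -/
/-!
If `x ^ d - y ^ d = m ≠ 0`, then `a = x - y` is a nonzero divisor of `m`, and `y` is a root of
`(X + a) ^ d - X ^ d - m`, a polynomial of degree `d - 1` (its `X ^ (d - 1)` coefficient is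
`d a ≠ 0`). So there are at most `2 τ(|m|)` choices of `a` and at most `d - 1` of `y` for each.
The bound `τ(n) ≪ n ^ ε` follows from `τ(n) = ∏ (k_p + 1)` by comparing each factor with
`p ^ (k_p ε)`: the ratio is at most `1` once `p ^ ε ≥ 2`, and bounded for the finitely many
smaller primes.
-/

open Finset Polynomial Real

namespace Polynomial

variable {R : Type*} [CommRing R]

lemma natDegree_X_add_C_pow_sub_X_pow_sub_C_le (a m : R) (d : ℕ) :
    ((X + C a) ^ d - X ^ d - C m).natDegree ≤ d - 1 := by
  nontriviality R
  rw [natDegree_sub_C]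
  rcases Nat.eq_zero_or_pos d with rfl | hd
  · simp
  · have hmonic := (isMonicOfDegree_X_add_one a).pow d
    rw [one_mul] at hmonic
    exact Nat.le_sub_one_of_lt (hmonic.natDegree_sub_X_pow hd.ne')

lemma coeff_X_add_C_pow_sub_X_pow_sub_C {d : ℕ} (hd : 2 ≤ d) (a m : R) :
    ((X + C a) ^ d - X ^ d - C m).coeff (d - 1) = d * a := by
  rw [coeff_sub, coeff_sub, coeff_X_add_C_pow, coeff_X_pow, coeff_C,
    Nat.sub_sub_self (by omega), Nat.choose_symm (by omega), Nat.choose_one_right]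
  simp [show d - 1 ≠ d by omega, show d - 1 ≠ 0 by omega, mul_comm]

variable [IsDomain R] [CharZero R]

lemma mem_roots_X_add_C_pow_sub_X_pow_sub_C {d : ℕ} (hd : 2 ≤ d) {a : R} (ha : a ≠ 0)
    (m y : R) :
    y ∈ ((X + C a) ^ d - X ^ d - C m).roots ↔ (y + a) ^ d - y ^ d = m := by
  have hcoeff := coeff_X_add_C_pow_sub_X_pow_sub_C hd a m
  have hne : (X + C a) ^ d - X ^ d - C m ≠ 0 := by
    intro h
    rw [h, coeff_zero] at hcoeff
    exact mul_ne_zero (Nat.cast_ne_zero.mpr (by omega)) ha hcoeff.symm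
  simp [mem_roots hne, sub_eq_zero]

end Polynomial

lemma Int.card_divisors (z : ℤ) : #z.divisors = 2 * #z.natAbs.divisors := by
  rw [Int.divisors, card_disjUnion, card_map, card_map, two_mul]

lemma Int.setOf_pow_sub_pow_eq_subset {d : ℕ} (hd : 2 ≤ d) {m : ℤ} (hm : m ≠ 0) :
    {p : ℤ × ℤ | p.1 ^ d - p.2 ^ d = m} ⊆
      ↑(m.divisors.biUnion fun a =>
        ((X + C a) ^ d - X ^ d - C m).roots.toFinset.image fun y => (y + a, y)) := by
  rintro ⟨x, y⟩ (h : x ^ d - y ^ d = m)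
  have hxy : x - y ≠ 0 := fun hxy => hm <| by rw [← h, sub_eq_zero.mp hxy, sub_self]
  have hdvd : x - y ∣ m := h ▸ sub_dvd_pow_sub_pow x y d
  simp only [coe_biUnion, coe_image, Set.mem_iUnion, Set.mem_image, mem_coe, Int.mem_divisors,
    Multiset.mem_toFinset]
  exact ⟨x - y, ⟨hdvd, hm⟩, y, (mem_roots_X_add_C_pow_sub_X_pow_sub_C hd hxy m y).mpr
    (by rwa [add_sub_cancel]), by rw [add_sub_cancel]⟩

theorem Int.setOf_pow_sub_pow_eq_finite_and_ncard_le {d : ℕ} (hd : 2 ≤ d) {m : ℤ}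
    (hm : m ≠ 0) :
    {p : ℤ × ℤ | p.1 ^ d - p.2 ^ d = m}.Finite ∧
      {p : ℤ × ℤ | p.1 ^ d - p.2 ^ d = m}.ncard ≤ 2 * (d - 1) * #m.natAbs.divisors := by
  have hsub := Int.setOf_pow_sub_pow_eq_subset hd hm
  refine ⟨(finite_toSet _).subset hsub, (Set.ncard_le_ncard hsub (finite_toSet _)).trans ?_⟩
  rw [Set.ncard_coe_finset]
  refine (card_biUnion_le_card_mul _ _ (d - 1) fun a _ => card_image_le.trans <|
    (Multiset.toFinset_card_le _).trans <| (card_roots' _).trans <|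
      natDegree_X_add_C_pow_sub_X_pow_sub_C_le a m d).trans ?_
  rw [Int.card_divisors, mul_right_comm]

lemma add_one_le_mul_two_rpow {ε : ℝ} (hε : 0 < ε) (k : ℕ) :
    (k + 1 : ℝ) ≤ (1 + (ε * log 2)⁻¹) * 2 ^ (k * ε) := by
  have hlog : 0 < ε * log 2 := mul_pos hε (log_pos one_lt_two)
  have hexp : 1 + k * ε * log 2 ≤ (2 : ℝ) ^ (k * ε) := by
    rw [rpow_def_of_pos two_pos]
    linarith [add_one_le_exp (log 2 * (k * ε))]
  have hone : (1 : ℝ) ≤ 2 ^ (k * ε) := one_le_rpow one_le_two (by positivity)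
  have hk : (k : ℝ) ≤ (ε * log 2)⁻¹ * 2 ^ (k * ε) := by
    rw [inv_mul_eq_div, le_div_iff₀ hlog]
    linarith
  linarith

lemma add_one_le_rpow_mul_of_two_rpow_inv_le {ε p : ℝ} (hε : 0 < ε) (hp : 2 ^ ε⁻¹ ≤ p)
    (k : ℕ) :
    (k + 1 : ℝ) ≤ p ^ (k * ε) := by
  have h2 : (2 : ℝ) ≤ p ^ ε := by
    calc (2 : ℝ) = (2 ^ ε⁻¹) ^ ε := by
          rw [← rpow_mul zero_le_two, inv_mul_cancel₀ hε.ne', rpow_one]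
      _ ≤ p ^ ε := rpow_le_rpow (by positivity) hp hε.le
  calc (k + 1 : ℝ) ≤ 2 ^ k := by exact_mod_cast Nat.lt_two_pow_self
    _ ≤ (p ^ ε) ^ k := pow_le_pow_left₀ zero_le_two h2 k
    _ = p ^ (k * ε) := by
        rw [← rpow_natCast, ← rpow_mul ((rpow_pos_of_pos two_pos _).le.trans hp), mul_comm]

lemma Nat.rpow_eq_prod_primeFactors {n : ℕ} (hn : n ≠ 0) (ε : ℝ) :
    (n : ℝ) ^ ε = ∏ p ∈ n.primeFactors, (p : ℝ) ^ (n.factorization p * ε) := by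
  conv_lhs => rw [← Nat.prod_factorization_pow_eq_self hn]
  rw [Nat.prod_factorization_eq_prod_primeFactors, Nat.cast_prod,
    ← finsetProd_rpow _ _ fun p _ => by positivity]
  refine prod_congr rfl fun p _ => ?_
  rw [Nat.cast_pow, ← rpow_natCast, ← rpow_mul p.cast_nonneg]

theorem Nat.exists_card_divisors_le_mul_rpow {ε : ℝ} (hε : 0 < ε) :
    ∃ K : ℝ, ∀ n : ℕ, n ≠ 0 → (#n.divisors : ℝ) ≤ K * n ^ ε := by
  set C : ℝ := 1 + (ε * Real.log 2)⁻¹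
  set B := ⌈(2 : ℝ) ^ ε⁻¹⌉₊
  have hC : 1 ≤ C := le_add_of_nonneg_right (by have := Real.log_pos one_lt_two; positivity)
  refine ⟨C ^ B, fun n hn => ?_⟩
  have hfactor : ∀ p ∈ n.primeFactors, (n.factorization p + 1 : ℝ) ≤
      (if p < B then C else 1) * (p : ℝ) ^ (n.factorization p * ε) := by
    intro p hp
    split_ifs with hpB
    · refine (add_one_le_mul_two_rpow hε _).trans (mul_le_mul_of_nonneg_left ?_ (by positivity))
      exact rpow_le_rpow zero_le_two (by exact_mod_cast (Nat.prime_of_mem_primeFactors hp).two_le)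
        (by positivity)
    · rw [one_mul]
      exact add_one_le_rpow_mul_of_two_rpow_inv_le hε
        ((Nat.le_ceil _).trans (by exact_mod_cast not_lt.mp hpB)) _
  have hsmall : ∏ p ∈ n.primeFactors, (if p < B then C else 1) ≤ C ^ B := by
    rw [← prod_filter, prod_const]
    refine pow_le_pow_right₀ hC <| (card_le_card fun p hp => ?_).trans (card_range B).le
    exact mem_range.mpr (mem_filter.mp hp).2
  calc (#n.divisors : ℝ) = ∏ p ∈ n.primeFactors, (n.factorization p + 1 : ℝ) := by
        rw [Nat.card_divisors hn]; push_cast; rfl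
    _ ≤ ∏ p ∈ n.primeFactors,
          (if p < B then C else 1) * (p : ℝ) ^ (n.factorization p * ε) :=
        prod_le_prod (fun _ _ => by positivity) hfactor
    _ ≤ C ^ B * n ^ ε := by
        rw [prod_mul_distrib, ← Nat.rpow_eq_prod_primeFactors hn]
        exact mul_le_mul_of_nonneg_right hsmall (by positivity)

/-- For `d ≥ 2` and a nonzero integer `m`, the equation `x^d - y^d = m` has at most
`2 (d-1) τ(|m|)` solutions `(x,y) ∈ ℤ²`, where `τ` is the number-of-divisors function;
in particular, for every `ε > 0` the number of solutions is `≤ K |m|^ε` with `K`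
depending only on `d` and `ε`. -/
theorem count_solutions_xd_sub_yd
    (d : ℕ) (hd : 2 ≤ d) :
    (∀ m : ℤ, m ≠ 0 →
      ({p : ℤ × ℤ | p.1 ^ d - p.2 ^ d = m}).Finite ∧
      ({p : ℤ × ℤ | p.1 ^ d - p.2 ^ d = m}).ncard ≤
        2 * (d - 1) * m.natAbs.divisors.card) ∧
    (∀ ε : ℝ, 0 < ε → ∃ K : ℝ, ∀ m : ℤ, m ≠ 0 →
      (({p : ℤ × ℤ | p.1 ^ d - p.2 ^ d = m}).ncard : ℝ) ≤ K * (|m| : ℝ) ^ ε) := by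
  refine ⟨fun m hm => Int.setOf_pow_sub_pow_eq_finite_and_ncard_le hd hm, fun ε hε => ?_⟩
  obtain ⟨K, hK⟩ := Nat.exists_card_divisors_le_mul_rpow hε
  refine ⟨(2 * (d - 1) : ℕ) * K, fun m hm => ?_⟩
  calc (({p : ℤ × ℤ | p.1 ^ d - p.2 ^ d = m}).ncard : ℝ)
      ≤ (2 * (d - 1) : ℕ) * (#m.natAbs.divisors : ℝ) := by
        exact_mod_cast (Int.setOf_pow_sub_pow_eq_finite_and_ncard_le hd hm).2
    _ ≤ (2 * (d - 1) : ℕ) * (K * (m.natAbs : ℝ) ^ ε) :=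
        mul_le_mul_of_nonneg_left (hK _ (Int.natAbs_ne_zero.mpr hm)) (by positivity)
    _ = (2 * (d - 1) : ℕ) * K * (|m| : ℝ) ^ ε := by
        rw [Nat.cast_natAbs, Int.cast_abs, mul_assoc]
end
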